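/- Let d = 2 and let p(e₁) = p₁, p(e₂) = p₂, p(−e₁) = q₁, p(−e₂) = q₂ with p₁, p₂, q₁, q₂ > 0, p₁ + p₂ + q₁ + q₂ = 1, p₁ ≠ q₁, p₂ ≠ q₂, and p(z) = 0 for all other z ∈ ℤ². Writing x = (x⁽¹⁾, x⁽²⁾), a product measure ν_α with α(0) = 1/2 is stationary for this exclusion process if and only if π is one of the following four functions: π(x) ≡ 1; π(x) = (p₁/q₁)^{x⁽¹⁾}; π(x) = (p₂/q₂)^{x⁽²⁾}; π(x) = (p₁/q₁)^{x⁽¹⁾}·(p₂/q₂)^{x⁽²⁾}. -/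

import Mathlib

open MeasureTheory Filter Topology

namespace ExclusionPaper

abbrev Zd (d : ℕ) := Fin d → ℤ

abbrev Conf (d : ℕ) := Zd d → Bool

noncomputable def ind (b : Bool) : ℝ := if b then 1 else 0

def swap {d : ℕ} (η : Conf d) (x y : Zd d) : Conf d :=
  fun z => if z = x then η y else if z = y then η x else η z

def IsCylinder {d : ℕ} (f : Conf d → ℝ) : Prop :=
  ∃ F : Finset (Zd d), ∀ η η' : Conf d, (∀ x ∈ F, η x = η' x) → f η = f η'

noncomputable def gen {d : ℕ} (p : Zd d → ℝ) (f : Conf d → ℝ) (η : Conf d) : ℝ :=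
  ∑' x : Zd d, ∑' y : Zd d,
    p (y - x) * ind (η x) * (1 - ind (η y)) * (f (swap η x y) - f η)

def IsStationary {d : ℕ} (p : Zd d → ℝ) (μ : Measure (Conf d)) : Prop :=
  ∀ f : Conf d → ℝ, IsCylinder f → ∫ η, gen p f η ∂μ = 0

def IsProductWith {d : ℕ} (α : Zd d → ℝ) (μ : Measure (Conf d)) : Prop :=
  IsProbabilityMeasure μ ∧
  ∀ F : Finset (Zd d), ∀ b : Zd d → Bool,
    μ {η : Conf d | ∀ x ∈ F, η x = b x} =
      ∏ x ∈ F, ENNReal.ofReal (if b x then α x else 1 - α x)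

noncomputable def pifun {d : ℕ} (α : Zd d → ℝ) (x : Zd d) : ℝ := α x / (1 - α x)

def innerZ {d : ℕ} (x y : Zd d) : ℤ := ∑ i, x i * y i

noncomputable def innerR {d : ℕ} (x : Zd d) (v : Fin d → ℝ) : ℝ := ∑ i, (x i : ℝ) * v i
section Infra
variable {μ : Measure (Conf 2)} {α : Zd 2 → ℝ}
-- ###### infrastructure
def E1 : Zd 2 := ![1, 0]
def E2 : Zd 2 := ![0, 1]

def dirs : Finset (Zd 2) := {E1, E2, -E1, -E2}

lemma E1_ne_zero : E1 ≠ 0 := by decide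
lemma E2_ne_zero : E2 ≠ 0 := by decide

lemma dirs_ne_zero : ∀ e ∈ dirs, e ≠ 0 := by decide

lemma neg_mem_dirs : ∀ e ∈ dirs, -e ∈ dirs := by decide

def cfg (S : Finset (Zd 2)) : Conf 2 := fun z => decide (z ∈ S)

noncomputable def wt (α : Zd 2 → ℝ) (K S : Finset (Zd 2)) : ℝ :=
  ∏ z ∈ K, if z ∈ S then α z else 1 - α z

def patt (K S : Finset (Zd 2)) : Set (Conf 2) :=
  {η : Conf 2 | ∀ z ∈ K, η z = decide (z ∈ S)}

lemma measurable_patt (K S : Finset (Zd 2)) : MeasurableSet (patt K S) := by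
  have : patt K S = ⋂ z ∈ (K : Set (Zd 2)), {η : Conf 2 | η z = decide (z ∈ S)} := by
    ext η; simp [patt, Set.mem_iInter]
  rw [this]
  exact MeasurableSet.biInter K.countable_toSet
    (fun z _ => measurable_pi_apply z (measurableSet_singleton _))



lemma toReal_measure_patt (hμ : IsProductWith α μ) (hα : ∀ x, α x ∈ Set.Ioo (0:ℝ) 1)
    (K S : Finset (Zd 2)) : (μ (patt K S)).toReal = wt α K S := by
  have h := hμ.2 K (fun z => decide (z ∈ S))
  have : patt K S = {η : Conf 2 | ∀ x ∈ K, η x = decide (x ∈ S)} := rfl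
  rw [this, h, ENNReal.toReal_prod]
  refine Finset.prod_congr rfl (fun x _ => ?_)
  rcases hα x with ⟨h0, h1⟩
  by_cases hx : x ∈ S <;> simp [hx, ENNReal.toReal_ofReal, le_of_lt h0, le_of_lt (by linarith : (0:ℝ) < 1 - α x)]

lemma cyl_repr (f : Conf 2 → ℝ) (F K : Finset (Zd 2)) (hFK : F ⊆ K)
    (hf : ∀ η η' : Conf 2, (∀ x ∈ F, η x = η' x) → f η = f η') (η : Conf 2) :
    f η = ∑ S ∈ K.powerset, (patt K S).indicator (fun _ => f (cfg S)) η := by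
  classical
  set S₀ : Finset (Zd 2) := K.filter (fun z => η z = true) with hS₀def
  have hS₀K : S₀ ∈ K.powerset := Finset.mem_powerset.2 (Finset.filter_subset _ _)
  have hmem : η ∈ patt K S₀ := by
    intro z hz
    cases hz' : η z <;> simp [hS₀def, Finset.mem_filter, hz, hz']
  rw [Finset.sum_eq_single_of_mem S₀ hS₀K]
  · rw [Set.indicator_of_mem hmem]
    exact (hf (cfg S₀) η (fun x hx => by
      have hxK := hFK hx
      have := hmem x hxK
      simp [cfg, this])).symm
  · intro S hS hne
    apply Set.indicator_of_notMem
    intro hmem'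
    apply hne
    apply Finset.ext
    intro z
    constructor
    · intro hzS
      have hzK : z ∈ K := Finset.mem_powerset.1 hS hzS
      have := hmem' z hzK
      simp [hS₀def, Finset.mem_filter, hzK]
      simpa [hzS] using this.symm
    · intro hzS₀
      rw [hS₀def, Finset.mem_filter] at hzS₀
      have := hmem' z hzS₀.1
      rw [hzS₀.2] at this
      simpa using this.symm

lemma int_cyl (hμ : IsProductWith α μ) (hα : ∀ x, α x ∈ Set.Ioo (0:ℝ) 1)
    (f : Conf 2 → ℝ) (F K : Finset (Zd 2)) (hFK : F ⊆ K)
    (hf : ∀ η η' : Conf 2, (∀ x ∈ F, η x = η' x) → f η = f η') :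
    ∫ η, f η ∂μ = ∑ S ∈ K.powerset, f (cfg S) * wt α K S := by
  haveI := hμ.1
  have hrepr : f = fun η => ∑ S ∈ K.powerset, (patt K S).indicator (fun _ => f (cfg S)) η :=
    funext (cyl_repr f F K hFK hf)
  rw [integral_congr_ae (ae_of_all _ (cyl_repr f F K hFK hf)), integral_finset_sum _
    (fun S _ => (integrable_const (f (cfg S))).indicator (measurable_patt K S))]
  refine Finset.sum_congr rfl (fun S _ => ?_)
  rw [integral_indicator_const _ (measurable_patt K S), measureReal_def, toReal_measure_patt hμ hα, smul_eq_mul,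
    mul_comm]

lemma integrable_cyl (hμ : IsProductWith α μ) (f : Conf 2 → ℝ) (F : Finset (Zd 2))
    (hf : ∀ η η' : Conf 2, (∀ x ∈ F, η x = η' x) → f η = f η') :
    Integrable f μ := by
  haveI := hμ.1
  have hrepr : f = fun η => ∑ S ∈ F.powerset, (patt F S).indicator (fun _ => f (cfg S)) η :=
    funext (cyl_repr f F F subset_rfl hf)
  rw [hrepr]
  exact integrable_finset_sum _
    (fun S _ => (integrable_const (f (cfg S))).indicator (measurable_patt F S))




lemma ind_true : ind true = 1 := rfl
lemma ind_false : ind false = 0 := rfl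

lemma int_mul_ind (hμ : IsProductWith α μ) (hα : ∀ x, α x ∈ Set.Ioo (0:ℝ) 1)
    (f : Conf 2 → ℝ) (F : Finset (Zd 2))
    (hf : ∀ η η' : Conf 2, (∀ x ∈ F, η x = η' x) → f η = f η')
    (w : Zd 2) (hw : w ∉ F) :
    ∫ η, f η * ind (η w) ∂μ = α w * ∫ η, f η ∂μ := by
  classical
  have hcyl : ∀ η η' : Conf 2, (∀ x ∈ insert w F, η x = η' x) →
      f η * ind (η w) = f η' * ind (η' w) := by
    intro η η' h
    rw [hf η η' (fun x hx => h x (Finset.mem_insert_of_mem hx)),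
      h w (Finset.mem_insert_self w F)]
  rw [int_cyl hμ hα _ (insert w F) (insert w F) subset_rfl hcyl,
    int_cyl hμ hα f F F subset_rfl hf,
    Finset.sum_powerset_insert hw]
  have h1 : ∀ S ∈ F.powerset, f (cfg S) * ind (cfg S w) * wt α (insert w F) S = 0 := by
    intro S hS
    have : w ∉ S := fun h => hw (Finset.mem_powerset.1 hS h)
    simp [cfg, this, ind]
  rw [Finset.sum_congr rfl h1, Finset.sum_const_zero, zero_add, Finset.mul_sum]
  refine Finset.sum_congr rfl (fun S hS => ?_)
  have hwS : w ∉ S := fun h => hw (Finset.mem_powerset.1 hS h)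
  have h2 : f (cfg (insert w S)) = f (cfg S) := by
    apply hf
    intro x hx
    have : x ≠ w := fun h => hw (h ▸ hx)
    simp [cfg, this]
  have h3 : wt α (insert w F) (insert w S) = α w * wt α F S := by
    unfold wt
    rw [Finset.prod_insert hw]
    congr 1
    · simp
    · refine Finset.prod_congr rfl (fun z hz => ?_)
      have : z ≠ w := fun h => hw (h ▸ hz)
      simp [this]
  rw [h2, h3]
  simp [cfg, ind]
  ring

lemma int_mul_one_sub_ind (hμ : IsProductWith α μ) (hα : ∀ x, α x ∈ Set.Ioo (0:ℝ) 1)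
    (f : Conf 2 → ℝ) (F : Finset (Zd 2))
    (hf : ∀ η η' : Conf 2, (∀ x ∈ F, η x = η' x) → f η = f η')
    (w : Zd 2) (hw : w ∉ F) :
    ∫ η, f η * (1 - ind (η w)) ∂μ = (1 - α w) * ∫ η, f η ∂μ := by
  have heq : (fun η : Conf 2 => f η * (1 - ind (η w))) =
      fun η => f η - f η * ind (η w) := by funext η; ring
  have hcyl : ∀ η η' : Conf 2, (∀ x ∈ insert w F, η x = η' x) →
      f η * ind (η w) = f η' * ind (η' w) := by
    intro η η' h
    rw [hf η η' (fun x hx => h x (Finset.mem_insert_of_mem hx)),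
      h w (Finset.mem_insert_self w F)]
  rw [heq, integral_sub (integrable_cyl hμ f F hf)
    (integrable_cyl hμ _ (insert w F) hcyl), int_mul_ind hμ hα f F hf w hw]
  ring

-- swap of a configuration pattern
lemma swap_cfg (S : Finset (Zd 2)) (x y : Zd 2) :
    swap (cfg S) x y = cfg (S.image (Equiv.swap x y)) := by
  funext z
  have hmem : ∀ u : Zd 2, (u ∈ S.image (Equiv.swap x y)) = (Equiv.swap x y u ∈ S) := by
    intro u
    apply propext
    constructor
    · intro h
      rcases Finset.mem_image.1 h with ⟨a, ha, hz⟩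
      rwa [← hz, Equiv.swap_apply_self]
    · intro h
      exact Finset.mem_image.2 ⟨_, h, Equiv.swap_apply_self _ _ _⟩
  unfold swap cfg
  by_cases hzx : z = x
  · subst hzx; simp [hmem, Equiv.swap_apply_left]
  · by_cases hzy : z = y
    · subst hzy; simp [hmem, hzx, Equiv.swap_apply_right]
    · simp [hmem, hzx, hzy, Equiv.swap_apply_of_ne_of_ne hzx hzy]

lemma image_swap_cancel (S : Finset (Zd 2)) (x y : Zd 2) :
    (S.image (Equiv.swap x y)).image (Equiv.swap x y) = S := by
  rw [Finset.image_image]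
  have : (Equiv.swap x y) ∘ (Equiv.swap x y) = id := by
    funext u; simp [Function.comp, Equiv.swap_apply_self]
  rw [this, Finset.image_id]

lemma int_swap (hμ : IsProductWith α μ) (hα : ∀ x, α x ∈ Set.Ioo (0:ℝ) 1)
    (f : Conf 2 → ℝ) (F : Finset (Zd 2))
    (hf : ∀ η η' : Conf 2, (∀ x ∈ F, η x = η' x) → f η = f η')
    (x y : Zd 2) (hxy : x ≠ y) :
    ((1 - α x) * α y) * ∫ η, f (swap η x y) * ind (η x) * (1 - ind (η y)) ∂μ
      = (α x * (1 - α y)) * ∫ η, f η * ind (η y) * (1 - ind (η x)) ∂μ := by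
  classical
  set K : Finset (Zd 2) := insert x (insert y F) with hK
  have hxK : x ∈ K := Finset.mem_insert_self _ _
  have hyK : y ∈ K := Finset.mem_insert_of_mem (Finset.mem_insert_self _ _)
  have hFK : F ⊆ K := fun z hz => Finset.mem_insert_of_mem (Finset.mem_insert_of_mem hz)
  set σ := Equiv.swap x y with hσ
  -- cylinder property of LHS integrand
  have hswap_agree : ∀ η η' : Conf 2, (∀ u ∈ K, η u = η' u) →
      ∀ z ∈ F, swap η x y z = swap η' x y z := by
    intro η η' h z hz
    unfold swap
    by_cases hzx : z = x
    · simp [hzx, h y hyK]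
    · by_cases hzy : z = y
      · subst hzy; simp [Ne.symm hxy, h x hxK]
      · simp [hzx, hzy, h z (hFK hz)]
  have hcylL : ∀ η η' : Conf 2, (∀ u ∈ K, η u = η' u) →
      f (swap η x y) * ind (η x) * (1 - ind (η y)) =
      f (swap η' x y) * ind (η' x) * (1 - ind (η' y)) := by
    intro η η' h
    rw [hf _ _ (fun z hz => hswap_agree η η' h z hz), h x hxK, h y hyK]
  have hcylR : ∀ η η' : Conf 2, (∀ u ∈ K, η u = η' u) →
      f η * ind (η y) * (1 - ind (η x)) = f η' * ind (η' y) * (1 - ind (η' x)) := by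
    intro η η' h
    rw [hf _ _ (fun z hz => h z (hFK hz)), h x hxK, h y hyK]
  rw [int_cyl hμ hα _ K K subset_rfl hcylL, int_cyl hμ hα _ K K subset_rfl hcylR]
  -- reindex the LHS sum by the involution S ↦ S.image σ
  have himg_mem : ∀ S ∈ K.powerset, S.image σ ∈ K.powerset := by
    intro S hS
    rw [Finset.mem_powerset] at hS ⊢
    intro a ha
    rcases Finset.mem_image.1 ha with ⟨s, hs, rfl⟩
    have hsK := hS hs
    by_cases h1 : s = x
    · subst h1; simp only [hσ, Equiv.swap_apply_left]; exact hyK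
    · by_cases h2 : s = y
      · subst h2; simp only [hσ, Equiv.swap_apply_right]; exact hxK
      · simp only [hσ, Equiv.swap_apply_of_ne_of_ne h1 h2]; exact hsK
  have hreindex :
      (∑ S ∈ K.powerset,
        f (swap (cfg S) x y) * ind (cfg S x) * (1 - ind (cfg S y)) * wt α K S)
      = ∑ S ∈ K.powerset,
        f (swap (cfg (S.image σ)) x y) * ind (cfg (S.image σ) x) *
          (1 - ind (cfg (S.image σ) y)) * wt α K (S.image σ) := by
    refine Finset.sum_nbij' (fun S => S.image σ) (fun S => S.image σ)
      himg_mem himg_mem (fun S _ => image_swap_cancel S x y)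
      (fun S _ => image_swap_cancel S x y) ?_
    intro S _
    rw [image_swap_cancel]
  rw [hreindex, Finset.mul_sum, Finset.mul_sum]
  refine Finset.sum_congr rfl (fun S hS => ?_)
  have hmem : ∀ u : Zd 2, u ∈ S.image σ ↔ σ u ∈ S := by
    intro u
    constructor
    · intro h
      rcases Finset.mem_image.1 h with ⟨a, ha, hz⟩
      rwa [← hz, Equiv.swap_apply_self]
    · intro h
      exact Finset.mem_image.2 ⟨_, h, Equiv.swap_apply_self _ _ _⟩
  have hmemx : x ∈ S.image σ ↔ y ∈ S := by
    rw [hmem x, hσ, Equiv.swap_apply_left]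
  have hmemy : y ∈ S.image σ ↔ x ∈ S := by
    rw [hmem y, hσ, Equiv.swap_apply_right]
  have hswapval : swap (cfg (S.image σ)) x y = cfg S := by
    rw [swap_cfg, image_swap_cancel]
  have hcx : cfg (S.image σ) x = cfg S y := by
    simp only [cfg, decide_eq_decide]; exact hmemx
  have hcy : cfg (S.image σ) y = cfg S x := by
    simp only [cfg, decide_eq_decide]; exact hmemy
  rw [hswapval, hcx, hcy]
  -- now case on membership of x, y in S
  by_cases hyS : y ∈ S
  · by_cases hxS : x ∈ S
    · simp [cfg, hxS, ind]
    · -- main case : y ∈ S, x ∉ S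
      have hwt : ∀ T : Finset (Zd 2), wt α K T =
          (if x ∈ T then α x else 1 - α x) * ((if y ∈ T then α y else 1 - α y) *
            ∏ z ∈ (K.erase x).erase y, (if z ∈ T then α z else 1 - α z)) := by
        intro T
        unfold wt
        rw [← Finset.mul_prod_erase K _ hxK,
          ← Finset.mul_prod_erase (K.erase x) _ (Finset.mem_erase.2 ⟨Ne.symm hxy, hyK⟩)]
      have hprod_eq : (∏ z ∈ (K.erase x).erase y, (if z ∈ S.image σ then α z else 1 - α z))
          = ∏ z ∈ (K.erase x).erase y, (if z ∈ S then α z else 1 - α z) := by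
        refine Finset.prod_congr rfl (fun z hz => ?_)
        have hzy : z ≠ y := (Finset.mem_erase.1 hz).1
        have hzx : z ≠ x := (Finset.mem_erase.1 (Finset.mem_erase.1 hz).2).1
        have : z ∈ S.image σ ↔ z ∈ S := by
          rw [hmem z, hσ, Equiv.swap_apply_of_ne_of_ne hzx hzy]
        simp only [this]
      have hxImg : x ∈ S.image σ := hmemx.2 hyS
      have hyImg : y ∉ S.image σ := fun h => hxS (hmemy.1 h)
      have hcgy : cfg S y = true := by simp [cfg, hyS]
      have hcgx : cfg S x = false := by simp [cfg, hxS]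
      rw [hwt (S.image σ), hwt S, hprod_eq, hcgy, hcgx, ind_true, ind_false,
        if_pos hxImg, if_neg hyImg, if_neg hxS, if_pos hyS]
      ring
  · simp [cfg, hyS, ind]


/-- the set of sites near the support -/
def Rset (F : Finset (Zd 2)) : Finset (Zd 2) :=
  F ∪ dirs.biUnion (fun e => F.image (fun z => z + e))

lemma subset_Rset (F : Finset (Zd 2)) : F ⊆ Rset F := Finset.subset_union_left

lemma image_subset_Rset (F : Finset (Zd 2)) (e : Zd 2) (he : e ∈ dirs) :
    F.image (fun z => z + e) ⊆ Rset F := fun a ha =>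
  Finset.mem_union_right _ (Finset.mem_biUnion.2 ⟨e, he, ha⟩)

lemma not_mem_Rset {F : Finset (Zd 2)} {x : Zd 2} (hx : x ∉ Rset F) :
    x ∉ F ∧ ∀ e ∈ dirs, x + e ∉ F := by
  constructor
  · exact fun h => hx (subset_Rset F h)
  · intro e he h
    apply hx
    apply image_subset_Rset F (-e) (neg_mem_dirs e he)
    exact Finset.mem_image.2 ⟨x + e, h, by abel⟩

lemma swap_agree_F {F : Finset (Zd 2)} {f : Conf 2 → ℝ}
    (hf : ∀ η η' : Conf 2, (∀ x ∈ F, η x = η' x) → f η = f η')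
    (x y : Zd 2) (hx : x ∉ F) (hy : y ∉ F) (η : Conf 2) :
    f (swap η x y) = f η := by
  apply hf
  intro z hz
  have hzx : z ≠ x := fun h => hx (h ▸ hz)
  have hzy : z ≠ y := fun h => hy (h ▸ hz)
  simp [swap, hzx, hzy]

lemma gen_eq_sum (p : Zd 2 → ℝ) (hp0 : ∀ z ∉ dirs, p z = 0)
    (f : Conf 2 → ℝ) (F : Finset (Zd 2))
    (hf : ∀ η η' : Conf 2, (∀ x ∈ F, η x = η' x) → f η = f η')
    (R : Finset (Zd 2)) (hR : Rset F ⊆ R) (η : Conf 2) :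
    gen p f η = ∑ x ∈ R, ∑ e ∈ dirs,
      p e * ind (η x) * (1 - ind (η (x + e))) * (f (swap η x (x + e)) - f η) := by
  unfold gen
  have hinner : ∀ x : Zd 2, (∑' y : Zd 2,
      p (y - x) * ind (η x) * (1 - ind (η y)) * (f (swap η x y) - f η)) =
      ∑ e ∈ dirs, p e * ind (η x) * (1 - ind (η (x + e))) * (f (swap η x (x + e)) - f η) := by
    intro x
    have h1 : (∑' y : Zd 2,
        p (y - x) * ind (η x) * (1 - ind (η y)) * (f (swap η x y) - f η)) =
        ∑ y ∈ dirs.image (fun e => x + e),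
          p (y - x) * ind (η x) * (1 - ind (η y)) * (f (swap η x y) - f η) := by
      apply tsum_eq_sum
      intro y hy
      have : y - x ∉ dirs := by
        intro hd
        exact hy (Finset.mem_image.2 ⟨y - x, hd, by abel⟩)
      rw [hp0 _ this, zero_mul, zero_mul, zero_mul]
    rw [h1, Finset.sum_image (fun a _ b _ h => by
      have := congrArg (fun v => v - x) h
      simpa using this)]
    refine Finset.sum_congr rfl (fun e _ => ?_)
    rw [add_sub_cancel_left]
  rw [tsum_congr hinner]
  apply tsum_eq_sum
  intro x hx
  have hx' := not_mem_Rset (fun h => hx (hR h))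
  refine Finset.sum_eq_zero (fun e he => ?_)
  rw [swap_agree_F hf x (x + e) hx'.1 (hx'.2 e he) η, sub_self, mul_zero]

/-- correlation integral -/
noncomputable def Jf (μ : Measure (Conf 2)) (f : Conf 2 → ℝ) (x y : Zd 2) : ℝ :=
  ∫ η, f η * ind (η y) * (1 - ind (η x)) ∂μ

noncomputable def ratio (α : Zd 2 → ℝ) (x y : Zd 2) : ℝ :=
  (α x * (1 - α y)) / ((1 - α x) * α y)

lemma cylK {F : Finset (Zd 2)} {f : Conf 2 → ℝ}
    (hf : ∀ η η' : Conf 2, (∀ x ∈ F, η x = η' x) → f η = f η') (x y : Zd 2) :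
    ∀ η η' : Conf 2, (∀ u ∈ insert x (insert y F), η u = η' u) →
      f (swap η x y) = f (swap η' x y) := by
  intro η η' h
  apply hf
  intro z hz
  have hxK : η x = η' x := h x (Finset.mem_insert_self _ _)
  have hyK : η y = η' y := h y (Finset.mem_insert_of_mem (Finset.mem_insert_self _ _))
  have hzK : η z = η' z := h z (Finset.mem_insert_of_mem (Finset.mem_insert_of_mem hz))
  unfold swap
  by_cases hzx : z = x
  · simp [hzx, hyK]
  · by_cases hzy : z = y
    · subst hzy; simp [hzx, hxK]
    · simp [hzx, hzy, hzK]

lemma int_swap' (hμ : IsProductWith α μ) (hα : ∀ x, α x ∈ Set.Ioo (0:ℝ) 1)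
    (f : Conf 2 → ℝ) (F : Finset (Zd 2))
    (hf : ∀ η η' : Conf 2, (∀ x ∈ F, η x = η' x) → f η = f η')
    (x y : Zd 2) (hxy : x ≠ y) :
    ∫ η, f (swap η x y) * ind (η x) * (1 - ind (η y)) ∂μ = ratio α x y * Jf μ f x y := by
  have h := int_swap hμ hα f F hf x y hxy
  rcases hα x with ⟨hx0, hx1⟩
  rcases hα y with ⟨hy0, hy1⟩
  have hne : (1 - α x) * α y ≠ 0 := ne_of_gt (mul_pos (by linarith) hy0)
  unfold ratio Jf
  rw [div_mul_eq_mul_div, eq_div_iff hne]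
  linear_combination h

lemma int_term (hμ : IsProductWith α μ) (hα : ∀ x, α x ∈ Set.Ioo (0:ℝ) 1)
    (f : Conf 2 → ℝ) (F : Finset (Zd 2))
    (hf : ∀ η η' : Conf 2, (∀ x ∈ F, η x = η' x) → f η = f η')
    (c : ℝ) (x y : Zd 2) (hxy : x ≠ y) :
    ∫ η, c * ind (η x) * (1 - ind (η y)) * (f (swap η x y) - f η) ∂μ
      = c * (ratio α x y * Jf μ f x y - Jf μ f y x) := by
  have heq : (fun η : Conf 2 => c * ind (η x) * (1 - ind (η y)) * (f (swap η x y) - f η)) =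
      fun η => c • (f (swap η x y) * ind (η x) * (1 - ind (η y))
        - f η * ind (η x) * (1 - ind (η y))) := by
    funext η; simp only [smul_eq_mul]; ring
  have hcylA : ∀ η η' : Conf 2, (∀ u ∈ insert x (insert y F), η u = η' u) →
      f (swap η x y) * ind (η x) * (1 - ind (η y)) =
      f (swap η' x y) * ind (η' x) * (1 - ind (η' y)) := by
    intro η η' h
    rw [cylK hf x y η η' h, h x (Finset.mem_insert_self _ _),
      h y (Finset.mem_insert_of_mem (Finset.mem_insert_self _ _))]
  have hcylB : ∀ η η' : Conf 2, (∀ u ∈ insert x (insert y F), η u = η' u) →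
      f η * ind (η x) * (1 - ind (η y)) = f η' * ind (η' x) * (1 - ind (η' y)) := by
    intro η η' h
    rw [hf η η' (fun z hz => h z (Finset.mem_insert_of_mem (Finset.mem_insert_of_mem hz))),
      h x (Finset.mem_insert_self _ _),
      h y (Finset.mem_insert_of_mem (Finset.mem_insert_self _ _))]
  rw [heq, integral_smul, integral_sub
    (integrable_cyl hμ _ (insert x (insert y F)) hcylA)
    (integrable_cyl hμ _ (insert x (insert y F)) hcylB),
    int_swap' hμ hα f F hf x y hxy]
  have : ∫ η, f η * ind (η x) * (1 - ind (η y)) ∂μ = Jf μ f y x := rfl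
  rw [this, smul_eq_mul]

lemma integral_gen (hμ : IsProductWith α μ) (hα : ∀ x, α x ∈ Set.Ioo (0:ℝ) 1)
    (p : Zd 2 → ℝ) (hp0 : ∀ z ∉ dirs, p z = 0)
    (f : Conf 2 → ℝ) (F : Finset (Zd 2))
    (hf : ∀ η η' : Conf 2, (∀ x ∈ F, η x = η' x) → f η = f η')
    (R : Finset (Zd 2)) (hR : Rset F ⊆ R) :
    ∫ η, gen p f η ∂μ = ∑ x ∈ R, ∑ e ∈ dirs,
      p e * (ratio α x (x + e) * Jf μ f x (x + e) - Jf μ f (x + e) x) := by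
  rw [integral_congr_ae (ae_of_all _ (gen_eq_sum p hp0 f F hf R hR))]
  have hint : ∀ (x e : Zd 2), e ∈ dirs → Integrable (fun η : Conf 2 =>
      p e * ind (η x) * (1 - ind (η (x + e))) * (f (swap η x (x + e)) - f η)) μ := by
    intro x e he
    apply integrable_cyl hμ _ (insert x (insert (x + e) F))
    intro η η' h
    rw [cylK hf x (x + e) η η' h, h x (Finset.mem_insert_self _ _),
      h (x + e) (Finset.mem_insert_of_mem (Finset.mem_insert_self _ _)),
      hf η η' (fun z hz => h z (Finset.mem_insert_of_mem (Finset.mem_insert_of_mem hz)))]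
  rw [integral_finset_sum _ (fun x _ => integrable_finset_sum _ (fun e he => hint x e he))]
  refine Finset.sum_congr rfl (fun x _ => ?_)
  rw [integral_finset_sum _ (fun e he => hint x e he)]
  refine Finset.sum_congr rfl (fun e he => ?_)
  have hxy : x ≠ x + e := by
    intro h
    exact dirs_ne_zero e he (by simpa using congrArg (fun v => v - x) h.symm)
  exact int_term hμ hα f F hf (p e) x (x + e) hxy

lemma ratio_J_eq (hμ : IsProductWith α μ) (hα : ∀ x, α x ∈ Set.Ioo (0:ℝ) 1)
    (f : Conf 2 → ℝ) (F : Finset (Zd 2))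
    (hf : ∀ η η' : Conf 2, (∀ x ∈ F, η x = η' x) → f η = f η')
    (x y : Zd 2) (hxy : x ≠ y) (hx : x ∉ F) (hy : y ∉ F) :
    ratio α x y * Jf μ f x y = Jf μ f y x := by
  rw [← int_swap' hμ hα f F hf x y hxy]
  unfold Jf
  refine integral_congr_ae (ae_of_all _ (fun η => ?_))
  show f (swap η x y) * ind (η x) * (1 - ind (η y)) = f η * ind (η x) * (1 - ind (η y))
  rw [swap_agree_F hf x y hx hy η]

lemma J_sub (hμ : IsProductWith α μ) (f : Conf 2 → ℝ) (F : Finset (Zd 2))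
    (hf : ∀ η η' : Conf 2, (∀ x ∈ F, η x = η' x) → f η = f η')
    (x y : Zd 2) :
    Jf μ f x y - Jf μ f y x = (∫ η, f η * ind (η y) ∂μ) - ∫ η, f η * ind (η x) ∂μ := by
  have cyl2 : ∀ (a b : Zd 2), ∀ η η' : Conf 2, (∀ u ∈ insert a (insert b F), η u = η' u) →
      f η * ind (η a) * (1 - ind (η b)) = f η' * ind (η' a) * (1 - ind (η' b)) := by
    intro a b η η' h
    rw [hf η η' (fun z hz => h z (Finset.mem_insert_of_mem (Finset.mem_insert_of_mem hz))),
      h a (Finset.mem_insert_self _ _),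
      h b (Finset.mem_insert_of_mem (Finset.mem_insert_self _ _))]
  have cyl1 : ∀ (a : Zd 2), ∀ η η' : Conf 2, (∀ u ∈ insert a F, η u = η' u) →
      f η * ind (η a) = f η' * ind (η' a) := by
    intro a η η' h
    rw [hf η η' (fun z hz => h z (Finset.mem_insert_of_mem hz)),
      h a (Finset.mem_insert_self _ _)]
  have I1y : Integrable (fun η : Conf 2 => f η * ind (η y)) μ :=
    integrable_cyl hμ _ (insert y F) (cyl1 y)
  have I1x : Integrable (fun η : Conf 2 => f η * ind (η x)) μ :=
    integrable_cyl hμ _ (insert x F) (cyl1 x)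
  have cyl2' : ∀ (a b : Zd 2), ∀ η η' : Conf 2, (∀ u ∈ insert a (insert b F), η u = η' u) →
      f η * ind (η a) * ind (η b) = f η' * ind (η' a) * ind (η' b) := by
    intro a b η η' h
    rw [hf η η' (fun z hz => h z (Finset.mem_insert_of_mem (Finset.mem_insert_of_mem hz))),
      h a (Finset.mem_insert_self _ _),
      h b (Finset.mem_insert_of_mem (Finset.mem_insert_self _ _))]
  have I2yx : Integrable (fun η : Conf 2 => f η * ind (η y) * ind (η x)) μ :=
    integrable_cyl hμ _ (insert y (insert x F)) (cyl2' y x)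
  have I2xy : Integrable (fun η : Conf 2 => f η * ind (η x) * ind (η y)) μ :=
    integrable_cyl hμ _ (insert x (insert y F)) (cyl2' x y)
  have e1 : Jf μ f x y = (∫ η, f η * ind (η y) ∂μ) - ∫ η, f η * ind (η y) * ind (η x) ∂μ := by
    unfold Jf
    rw [show (fun η : Conf 2 => f η * ind (η y) * (1 - ind (η x))) =
      fun η : Conf 2 => f η * ind (η y) - f η * ind (η y) * ind (η x) from
        funext (fun η => by ring), integral_sub I1y I2yx]
  have e2 : Jf μ f y x = (∫ η, f η * ind (η x) ∂μ) - ∫ η, f η * ind (η x) * ind (η y) ∂μ := by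
    unfold Jf
    rw [show (fun η : Conf 2 => f η * ind (η x) * (1 - ind (η y))) =
      fun η : Conf 2 => f η * ind (η x) - f η * ind (η x) * ind (η y) from
        funext (fun η => by ring), integral_sub I1x I2xy]
  have e3 : (∫ η, f η * ind (η y) * ind (η x) ∂μ) = ∫ η, f η * ind (η x) * ind (η y) ∂μ := by
    rw [show (fun η : Conf 2 => f η * ind (η y) * ind (η x)) =
      fun η : Conf 2 => f η * ind (η x) * ind (η y) from funext (fun η => by ring)]
  linarith


lemma step_mul {β : Type*} (m : Zd 2 → β) (e : Zd 2) (h : ∀ u, m (u + e) = m u) :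
    ∀ (u : Zd 2) (t : ℤ), m (u + (t : Zd 2) * e) = m u := by
  intro u t
  induction t using Int.induction_on with
  | zero => simp
  | succ i ih =>
      rw [show u + (((i : ℤ) + 1 : ℤ) : Zd 2) * e = (u + ((i : ℤ) : Zd 2) * e) + e by
        push_cast; ring, h, ih]
  | pred i ih =>
      have h2 := h (u + ((-(i:ℤ) - 1 : ℤ) : Zd 2) * e)
      rw [show u + ((-(i:ℤ) - 1 : ℤ) : Zd 2) * e + e = u + ((-(i:ℤ) : ℤ) : Zd 2) * e by
        push_cast; ring] at h2
      rw [← h2, ih]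

lemma decomp (u : Zd 2) : (0 : Zd 2) + ((u 1 : ℤ) : Zd 2) * E2 + ((u 0 : ℤ) : Zd 2) * E1 = u := by
  funext i
  fin_cases i <;> simp [E1, E2]

lemma const_of_two {β : Type*} (m : Zd 2 → β) (h1 : ∀ u, m (u + E1) = m u)
    (h2 : ∀ u, m (u + E2) = m u) : ∀ u, m u = m 0 := by
  intro u
  have h := congrArg m (decomp u)
  rw [← h, step_mul m E1 h1, step_mul m E2 h2]

lemma diff_zero (m : Zd 2 → ℤ) (h01 : ∀ u, m u = 0 ∨ m u = 1) (e : Zd 2) (k : ℤ)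
    (hk : ∀ u, m (u + e) - m u = k) : k = 0 := by
  have i1 := hk 0
  have i2 := hk (0 + e)
  rcases h01 0 with h | h <;> rcases h01 (0 + e) with h' | h' <;>
    rcases h01 (0 + e + e) with h'' | h'' <;> omega

lemma resolve (c₁ c₂ : ℝ) (hc₁ : c₁ ≠ 0) (hc₂ : c₂ ≠ 0) (hsum : c₁ + c₂ ≠ 0)
    (hdiff : c₁ ≠ c₂) (m1 m2 m3 m4 : ℤ)
    (h1 : m1 = 0 ∨ m1 = 1) (h2 : m2 = 0 ∨ m2 = 1) (h3 : m3 = 0 ∨ m3 = 1)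
    (h4 : m4 = 0 ∨ m4 = 1)
    (heq : c₁ * ((m1 : ℝ) - (m2 : ℝ)) + c₂ * ((m3 : ℝ) - (m4 : ℝ)) = 0) :
    m1 = m2 ∧ m3 = m4 := by
  rcases h1 with h | h <;> rcases h2 with h' | h' <;> rcases h3 with g | g <;>
    rcases h4 with g' | g' <;> rw [h, h', g, g'] at heq <;> push_cast at heq <;>
    first
      | (constructor <;> omega)
      | (exfalso
         first
           | exact hc₁ (by linarith)
           | exact hc₂ (by linarith)
           | exact hsum (by linarith)
           | exact hdiff (by linarith))

/-- the combinatorial classification -/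
lemma classify (n₁ n₂ : Zd 2 → ℤ)
    (h01 : ∀ u, n₁ u = 0 ∨ n₁ u = 1) (h02 : ∀ u, n₂ u = 0 ∨ n₂ u = 1)
    (c₁ c₂ L₁ L₂ : ℝ) (hc₁ : c₁ ≠ 0) (hc₂ : c₂ ≠ 0) (hL₁ : L₁ ≠ 0) (hL₂ : L₂ ≠ 0)
    (hsgn₁ : 0 < c₁ ↔ 0 < L₁) (hsgn₂ : 0 < c₂ ↔ 0 < L₂)
    (hA : ∀ u, c₁ * ((n₁ u : ℝ) - (n₁ (u + -E1) : ℝ))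
      + c₂ * ((n₂ u : ℝ) - (n₂ (u + -E2) : ℝ)) = 0)
    (hC : ∀ u, ((n₁ u : ℝ) - (n₁ (u + E2) : ℝ)) * L₁
      = ((n₂ u : ℝ) - (n₂ (u + E1) : ℝ)) * L₂) :
    (∀ u, n₁ u = n₁ 0) ∧ (∀ u, n₂ u = n₂ 0) := by
  -- final assembler from the four step-invariances
  have finish : (∀ u, n₁ (u + E1) = n₁ u) → (∀ u, n₁ (u + E2) = n₁ u) →
      (∀ u, n₂ (u + E1) = n₂ u) → (∀ u, n₂ (u + E2) = n₂ u) →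
      (∀ u, n₁ u = n₁ 0) ∧ (∀ u, n₂ u = n₂ 0) := by
    intro a b c d
    exact ⟨const_of_two n₁ a b, const_of_two n₂ c d⟩
  -- a common second part: given n₁ E1-invariant and n₂ E2-invariant and a "curl"
  -- relation a u = b u with a E1-invariant and b E2-invariant, conclude.
  have part2 : ∀ (σ : ℤ), (σ = 1 ∨ σ = -1) → (∀ u, n₁ (u + -E1) = n₁ u) →
      (∀ u, n₂ (u + -E2) = n₂ u) →
      (∀ u, n₁ u - n₁ (u + E2) = σ * (n₂ u - n₂ (u + E1))) →
      (∀ u, n₁ u = n₁ 0) ∧ (∀ u, n₂ u = n₂ 0) := by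
    intro σ hσ hi1 hi2 hCz
    have hs1 : ∀ u, n₁ (u + E1) = n₁ u := by
      intro u
      have h := hi1 (u + E1)
      rw [show u + E1 + -E1 = u by ring] at h
      exact h.symm
    have hs2 : ∀ u, n₂ (u + E2) = n₂ u := by
      intro u
      have h := hi2 (u + E2)
      rw [show u + E2 + -E2 = u by ring] at h
      exact h.symm
    -- a := fun u => n₁ u - n₁ (u + E2) is invariant in both directions
    set a : Zd 2 → ℤ := fun u => n₁ u - n₁ (u + E2) with ha
    have haE1 : ∀ u, a (u + E1) = a u := by
      intro u
      simp only [ha]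
      rw [hs1 u, show u + E1 + E2 = (u + E2) + E1 by ring, hs1 (u + E2)]
    have haE2 : ∀ u, a (u + E2) = a u := by
      intro u
      have e1 := hCz (u + E2)
      have e2 := hCz u
      have e3 : n₂ (u + E2) = n₂ u := hs2 u
      have e4 : n₂ (u + E2 + E1) = n₂ (u + E1) := by
        rw [show u + E2 + E1 = (u + E1) + E2 by ring]
        exact hs2 (u + E1)
      simp only [ha]
      rcases hσ with hσ | hσ <;> rw [hσ] at e1 e2 <;> omega
    have hconst := const_of_two a haE1 haE2
    have hk : ∀ u, n₁ (u + E2) - n₁ u = -(a 0) := by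
      intro u
      have := hconst u
      simp only [ha] at this ⊢
      omega
    have hk0 := diff_zero n₁ h01 E2 (-(a 0)) hk
    have hs3 : ∀ u, n₁ (u + E2) = n₁ u := by
      intro u
      have := hk u
      omega
    have hs4 : ∀ u, n₂ (u + E1) = n₂ u := by
      intro u
      have h1 := hCz u
      have h2 := hs3 u
      rcases hσ with hσ | hσ <;> rw [hσ] at h1 <;> omega
    exact finish hs1 hs3 hs4 hs2
  by_cases hLL : L₁ = L₂
  · -- same-sign case
    have hprod : 0 < c₁ * c₂ := by
      rcases lt_trichotomy c₁ 0 with h | h | h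
      · have : ¬ 0 < c₂ := fun hpos => absurd (hsgn₁.2 ((hLL ▸ hsgn₂).1 hpos)) (by linarith)
        have : c₂ < 0 := lt_of_le_of_ne (not_lt.1 this) hc₂
        exact mul_pos_of_neg_of_neg h this
      · exact absurd h hc₁
      · have : 0 < c₂ := (hLL ▸ hsgn₂).2 (hsgn₁.1 h)
        exact mul_pos h this
    by_cases hcc : c₂ = c₁
    · -- harmonic case, σ = +1
      have hAz : ∀ u, (n₁ u - n₁ (u + -E1)) + (n₂ u - n₂ (u + -E2)) = 0 := by
        intro u
        have h := hA u
        rw [hcc] at h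
        have h' : c₁ * (((n₁ u : ℝ) - (n₁ (u + -E1) : ℝ)) + ((n₂ u : ℝ) - (n₂ (u + -E2) : ℝ)))
            = 0 := by linarith
        have h'' := (mul_eq_zero.1 h').resolve_left hc₁
        exact_mod_cast h''
      have hCz : ∀ u, n₁ u - n₁ (u + E2) = n₂ u - n₂ (u + E1) := by
        intro u
        have h := hC u
        rw [← hLL, mul_left_inj' hL₁] at h
        exact_mod_cast h
      have hnbr : ∀ u, n₁ (u + E1) = n₁ u ∧ n₁ (u + -E1) = n₁ u ∧ n₁ (u + E2) = n₁ u ∧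
          n₁ (u + -E2) = n₁ u := by
        intro u
        have e1 := hAz (u + E1)
        rw [show u + E1 + -E1 = u by ring, show u + E1 + -E2 = u + -E2 + E1 by ring] at e1
        have e2 := hAz u
        have e3 := hCz u
        have e4 := hCz (u + -E2)
        rw [show u + -E2 + E2 = u by ring] at e4
        have hS : n₁ (u + E1) + n₁ (u + -E1) + n₁ (u + E2) + n₁ (u + -E2) = 4 * n₁ u := by
          omega
        rcases h01 u with h | h <;> rcases h01 (u + E1) with h' | h' <;>
          rcases h01 (u + -E1) with g | g <;> rcases h01 (u + E2) with g' | g' <;>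
          rcases h01 (u + -E2) with g'' | g'' <;> omega
      have hs1 : ∀ u, n₁ (u + E1) = n₁ u := fun u => (hnbr u).1
      have hs3 : ∀ u, n₁ (u + E2) = n₁ u := fun u => (hnbr u).2.2.1
      have hs2 : ∀ u, n₂ (u + E2) = n₂ u := by
        intro u
        have h := hAz (u + E2)
        rw [show u + E2 + -E2 = u by ring, show u + E2 + -E1 = u + -E1 + E2 by ring] at h
        have h2 := (hnbr u).2.2.1
        have h3 := (hnbr (u + -E1)).2.2.1
        have h4 := (hnbr u).2.1
        omega
      have hs4 : ∀ u, n₂ (u + E1) = n₂ u := by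
        intro u
        have h := hCz u
        have := hs3 u
        omega
      exact finish hs1 hs3 hs4 hs2
    · -- separated case with same signs
      have hsum : c₁ + c₂ ≠ 0 := fun h => by
        have h2 : c₂ = -c₁ := by linarith
        rw [h2] at hprod
        nlinarith [sq_nonneg c₁]
      have hdiff : c₁ ≠ c₂ := fun h => hcc h.symm
      have hd : ∀ u, n₁ u = n₁ (u + -E1) ∧ n₂ u = n₂ (u + -E2) := by
        intro u
        exact resolve c₁ c₂ hc₁ hc₂ hsum hdiff _ _ _ _ (h01 u) (h01 (u + -E1))
          (h02 u) (h02 (u + -E2)) (hA u)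
      refine part2 1 (Or.inl rfl) (fun u => ((hd u).1).symm) (fun u => ((hd u).2).symm) ?_
      intro u
      have h := hC u
      rw [hLL, mul_left_inj' hL₂] at h
      have h2 : n₁ u - n₁ (u + E2) = n₂ u - n₂ (u + E1) := by exact_mod_cast h
      omega
  · by_cases hLL' : L₁ = -L₂
    · -- opposite-sign case
      have hL12 : 0 < L₁ ↔ L₂ < 0 := by
        constructor <;> intro h <;> linarith [hLL']
      have hprod : c₁ * c₂ < 0 := by
        rcases lt_trichotomy c₁ 0 with h | h | h
        · have h1 : ¬ 0 < L₁ := fun hl => absurd (hsgn₁.2 hl) (by linarith)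
          have h2 : ¬ L₂ < 0 := fun hl => h1 (hL12.2 hl)
          have h3 : 0 < L₂ := lt_of_le_of_ne (not_lt.1 h2) (Ne.symm hL₂)
          exact mul_neg_of_neg_of_pos h (hsgn₂.2 h3)
        · exact absurd h hc₁
        · have h1 : L₂ < 0 := hL12.1 (hsgn₁.1 h)
          have h2 : ¬ 0 < c₂ := fun hp => absurd (hsgn₂.1 hp) (by linarith)
          exact mul_neg_of_pos_of_neg h (lt_of_le_of_ne (not_lt.1 h2) hc₂)
      by_cases hcc : c₂ = -c₁
      · -- harmonic case, σ = -1
        have hAz : ∀ u, (n₁ u - n₁ (u + -E1)) - (n₂ u - n₂ (u + -E2)) = 0 := by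
          intro u
          have h := hA u
          rw [hcc] at h
          have h' : c₁ * (((n₁ u : ℝ) - (n₁ (u + -E1) : ℝ)) - ((n₂ u : ℝ) - (n₂ (u + -E2) : ℝ)))
              = 0 := by linarith
          have h'' := (mul_eq_zero.1 h').resolve_left hc₁
          exact_mod_cast h''
        have hCz : ∀ u, n₁ u - n₁ (u + E2) = -(n₂ u - n₂ (u + E1)) := by
          intro u
          have h := hC u
          rw [hLL'] at h
          have h' : ((n₁ u : ℝ) - (n₁ (u + E2) : ℝ)) * (-L₂)
              = (-((n₂ u : ℝ) - (n₂ (u + E1) : ℝ))) * (-L₂) := by linarith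
          rw [mul_left_inj' (by simpa using hL₂)] at h'
          exact_mod_cast h'
        have hnbr : ∀ u, n₁ (u + E1) = n₁ u ∧ n₁ (u + -E1) = n₁ u ∧ n₁ (u + E2) = n₁ u ∧
            n₁ (u + -E2) = n₁ u := by
          intro u
          have e1 := hAz (u + E1)
          rw [show u + E1 + -E1 = u by ring, show u + E1 + -E2 = u + -E2 + E1 by ring] at e1
          have e2 := hAz u
          have e3 := hCz u
          have e4 := hCz (u + -E2)
          rw [show u + -E2 + E2 = u by ring] at e4
          have hS : n₁ (u + E1) + n₁ (u + -E1) + n₁ (u + E2) + n₁ (u + -E2) = 4 * n₁ u := by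
            omega
          rcases h01 u with h | h <;> rcases h01 (u + E1) with h' | h' <;>
            rcases h01 (u + -E1) with g | g <;> rcases h01 (u + E2) with g' | g' <;>
            rcases h01 (u + -E2) with g'' | g'' <;> omega
        have hs1 : ∀ u, n₁ (u + E1) = n₁ u := fun u => (hnbr u).1
        have hs3 : ∀ u, n₁ (u + E2) = n₁ u := fun u => (hnbr u).2.2.1
        have hs2 : ∀ u, n₂ (u + E2) = n₂ u := by
          intro u
          have h := hAz (u + E2)
          rw [show u + E2 + -E2 = u by ring, show u + E2 + -E1 = u + -E1 + E2 by ring] at h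
          have h2 := (hnbr u).2.2.1
          have h3 := (hnbr (u + -E1)).2.2.1
          have h4 := (hnbr u).2.1
          omega
        have hs4 : ∀ u, n₂ (u + E1) = n₂ u := by
          intro u
          have h := hCz u
          have := hs3 u
          omega
        exact finish hs1 hs3 hs4 hs2
      · -- separated case with opposite signs
        have hsum : c₁ + c₂ ≠ 0 := fun h => hcc (by linarith)
        have hdiff : c₁ ≠ c₂ := fun h => by
          rw [← h] at hprod
          nlinarith [sq_nonneg c₁]
        have hd : ∀ u, n₁ u = n₁ (u + -E1) ∧ n₂ u = n₂ (u + -E2) := by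
          intro u
          exact resolve c₁ c₂ hc₁ hc₂ hsum hdiff _ _ _ _ (h01 u) (h01 (u + -E1))
            (h02 u) (h02 (u + -E2)) (hA u)
        refine part2 (-1) (Or.inr rfl) (fun u => ((hd u).1).symm)
          (fun u => ((hd u).2).symm) ?_
        intro u
        have h := hC u
        rw [hLL'] at h
        have h2 : ((n₁ u : ℝ) - (n₁ (u + E2) : ℝ)) * L₂
            = (-((n₂ u : ℝ) - (n₂ (u + E1) : ℝ))) * L₂ := by linarith
        rw [mul_left_inj' hL₂] at h2
        have h3 : (n₁ u : ℤ) - n₁ (u + E2) = -((n₂ u : ℤ) - n₂ (u + E1)) := by exact_mod_cast h2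
        omega
    · -- fully separated case : L₁ ≠ ± L₂
      have hd : ∀ u, n₁ u = n₁ (u + E2) ∧ n₂ u = n₂ (u + E1) := by
        intro u
        refine resolve L₁ (-L₂) hL₁ (by simpa using hL₂) (fun h => hLL (by linarith))
          (fun h => hLL' (by linarith)) _ _ _ _ (h01 u) (h01 (u + E2)) (h02 u)
          (h02 (u + E1)) ?_
        have h := hC u
        linarith
      have hi3 : ∀ u, n₁ (u + E2) = n₁ u := fun u => ((hd u).1).symm
      have hi4 : ∀ u, n₂ (u + E1) = n₂ u := fun u => ((hd u).2).symm
      -- φ := c₁ * d₁ is invariant in both directions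
      set φ : Zd 2 → ℝ := fun u => c₁ * ((n₁ u : ℝ) - (n₁ (u + -E1) : ℝ)) with hφ
      have hφE2 : ∀ u, φ (u + E2) = φ u := by
        intro u
        simp only [hφ]
        rw [hi3 u, show u + E2 + -E1 = (u + -E1) + E2 by ring, hi3 (u + -E1)]
      have hφE1 : ∀ u, φ (u + E1) = φ u := by
        intro u
        have ha1 := hA u
        have ha2 := hA (u + E1)
        rw [show u + E1 + -E2 = (u + -E2) + E1 by ring] at ha2
        have e1 : n₂ (u + E1) = n₂ u := hi4 u
        have e2 : n₂ (u + -E2 + E1) = n₂ (u + -E2) := hi4 (u + -E2)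
        simp only [hφ]
        rw [e1, e2] at ha2
        linarith
      have hφconst := const_of_two φ hφE1 hφE2
      have hdz : ∀ u, n₁ u - n₁ (u + -E1) = n₁ 0 - n₁ (0 + -E1) := by
        intro u
        have h := hφconst u
        simp only [hφ] at h
        have h' := mul_left_cancel₀ hc₁ h
        exact_mod_cast h'
      have hk : ∀ u, n₁ (u + -E1) - n₁ u = -(n₁ 0 - n₁ (0 + -E1)) := by
        intro u
        have := hdz u
        omega
      have hk0 := diff_zero n₁ h01 (-E1) _ hk
      have hi1 : ∀ u, n₁ (u + -E1) = n₁ u := by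
        intro u
        have := hk u
        omega
      have hs1 : ∀ u, n₁ (u + E1) = n₁ u := by
        intro u
        have h := hi1 (u + E1)
        rw [show u + E1 + -E1 = u by ring] at h
        exact h.symm
      have hi2 : ∀ u, n₂ (u + -E2) = n₂ u := by
        intro u
        have ha1 := hA u
        have h1 := hi1 u
        have h2 : ((n₁ u : ℝ) - (n₁ (u + -E1) : ℝ)) = 0 := by
          rw [h1]; ring
        rw [h2, mul_zero, zero_add] at ha1
        have h3 := (mul_eq_zero.1 ha1).resolve_left hc₂
        have h4 : (n₂ u : ℤ) - n₂ (u + -E2) = 0 := by exact_mod_cast h3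
        omega
      have hs2 : ∀ u, n₂ (u + E2) = n₂ u := by
        intro u
        have h := hi2 (u + E2)
        rw [show u + E2 + -E2 = u by ring] at h
        exact h.symm
      exact finish hs1 hi3 hi4 hs2

lemma pi_formula (π : Zd 2 → ℝ) (c₁ c₂ : ℝ) (hc₁ : c₁ ≠ 0) (hc₂ : c₂ ≠ 0) (hπ0 : π 0 = 1)
    (h1 : ∀ u, π (u + E1) = c₁ * π u) (h2 : ∀ u, π (u + E2) = c₂ * π u) :
    ∀ u, π u = c₁ ^ (u 0) * c₂ ^ (u 1) := by
  have geom : ∀ (c : ℝ), c ≠ 0 → ∀ (e : Zd 2), (∀ u, π (u + e) = c * π u) →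
      ∀ (u : Zd 2) (t : ℤ), π (u + (t : Zd 2) * e) = c ^ t * π u := by
    intro c hc e he u t
    induction t using Int.induction_on with
    | zero => simp
    | succ i ih =>
        rw [show u + (((i : ℤ) + 1 : ℤ) : Zd 2) * e = (u + ((i : ℤ) : Zd 2) * e) + e by
          push_cast; ring, he, ih, show ((i : ℤ) + 1 : ℤ) = (i : ℤ) + 1 from rfl,
          zpow_add₀ hc, zpow_one]
        ring
    | pred i ih =>
        have h2' := he (u + ((-(i:ℤ) - 1 : ℤ) : Zd 2) * e)
        rw [show u + ((-(i:ℤ) - 1 : ℤ) : Zd 2) * e + e = u + ((-(i:ℤ) : ℤ) : Zd 2) * e by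
          push_cast; ring, ih] at h2'
        have : π (u + ((-(i:ℤ) - 1 : ℤ) : Zd 2) * e) = c⁻¹ * (c ^ (-(i:ℤ)) * π u) := by
          field_simp at h2' ⊢
          linarith [h2']
        rw [this, show (-(i:ℤ) - 1 : ℤ) = -(i:ℤ) - 1 from rfl, zpow_sub_one₀ hc]
        ring
  intro u
  have hu : π u = π ((0 : Zd 2) + ((u 1 : ℤ) : Zd 2) * E2 + ((u 0 : ℤ) : Zd 2) * E1) := by
    rw [decomp u]
  rw [hu, geom c₁ hc₁ E1 h1, geom c₂ hc₂ E2 h2, hπ0]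
  ring

lemma sum_dirs (g : Zd 2 → ℝ) :
    ∑ e ∈ dirs, g e = (g E1 + g (-E1)) + (g E2 + g (-E2)) := by
  have h : dirs = {E1, E2, -E1, -E2} := rfl
  rw [h, Finset.sum_insert (by decide), Finset.sum_insert (by decide),
    Finset.sum_insert (by decide), Finset.sum_singleton]
  ring

lemma sum_supp (u : Zd 2 → ℝ) (D R : Finset (Zd 2))
    (hsupp : ∀ z ∉ D, u z = 0) (hDR : D ⊆ R) :
    ∑ x ∈ R, u x = ∑ x ∈ D, u x :=
  (Finset.sum_subset hDR (fun z _ hz => hsupp z hz)).symm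

lemma sum_shift (u : Zd 2 → ℝ) (R : Finset (Zd 2)) (e : Zd 2) :
    ∑ x ∈ R, u (x + e) = ∑ y ∈ R.image (fun z => z + e), u y :=
  (Finset.sum_image (fun a _ b _ h => by simpa using congrArg (fun v => v - e) h)).symm

lemma pifun_pos (hα : ∀ x, α x ∈ Set.Ioo (0:ℝ) 1) (x : Zd 2) : 0 < pifun α x := by
  rcases hα x with ⟨h0, h1⟩
  exact div_pos h0 (by linarith)

lemma ratio_eq_pifun_div (hα : ∀ x, α x ∈ Set.Ioo (0:ℝ) 1) (x y : Zd 2) :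
    ratio α x y = pifun α x / pifun α y := by
  rcases hα x with ⟨hx0, hx1⟩
  rcases hα y with ⟨hy0, hy1⟩
  have h1 : (1:ℝ) - α x ≠ 0 := by linarith
  have h2 : α y ≠ 0 := ne_of_gt hy0
  have h3 : (1:ℝ) - α y ≠ 0 := by linarith
  unfold ratio pifun
  field_simp

lemma alpha_eq_of_pifun_eq (hα : ∀ x, α x ∈ Set.Ioo (0:ℝ) 1) {x y : Zd 2}
    (h : pifun α x = pifun α y) : α x = α y := by
  rcases hα x with ⟨hx0, hx1⟩
  rcases hα y with ⟨hy0, hy1⟩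
  unfold pifun at h
  rw [div_eq_div_iff (by linarith) (by linarith)] at h
  nlinarith

/-- the key per-direction vanishing lemma for the backward implication -/
lemma dir_sum_zero (hμ : IsProductWith α μ) (hα : ∀ x, α x ∈ Set.Ioo (0:ℝ) 1)
    (f : Conf 2 → ℝ) (F : Finset (Zd 2))
    (hf : ∀ η η' : Conf 2, (∀ x ∈ F, η x = η' x) → f η = f η')
    (e₀ : Zd 2) (he₀ : e₀ ∈ dirs)
    (pp qq : ℝ) (hpp : 0 < pp) (hqq : 0 < qq)
    (hcase : (∀ x, α (x + e₀) = α x) ∨ (∀ x, pifun α (x + e₀) = (pp/qq) * pifun α x)) :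
    ∑ x ∈ Rset F, (pp * (ratio α x (x + e₀) * Jf μ f x (x + e₀) - Jf μ f (x + e₀) x)
      + qq * (ratio α x (x + -e₀) * Jf μ f x (x + -e₀) - Jf μ f (x + -e₀) x)) = 0 := by
  have harg : ∀ x : Zd 2, x + -e₀ + e₀ = x := fun x => by abel
  have he₀' : -e₀ ∈ dirs := neg_mem_dirs e₀ he₀
  have hxne : ∀ x : Zd 2, x ≠ x + e₀ := by
    intro x h
    exact dirs_ne_zero e₀ he₀ (by simpa using congrArg (fun v => v - x) h.symm)
  have hxne' : ∀ x : Zd 2, x ≠ x + -e₀ := by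
    intro x h
    exact dirs_ne_zero (-e₀) he₀' (by simpa using congrArg (fun v => v - x) h.symm)
  rcases hcase with hc | hc
  · -- equal case
    set If := ∫ η, f η ∂μ with hIf
    set g : Zd 2 → ℝ := fun z => ∫ η, f η * ind (η z) ∂μ with hg
    set h : Zd 2 → ℝ := fun z => g z - α z * If with hh
    have hsupp : ∀ z ∉ F, h z = 0 := by
      intro z hz
      simp only [hh, hg, hIf]
      rw [int_mul_ind hμ hα f F hf z hz, sub_self]
    have hr : ∀ x y : Zd 2, α y = α x → ratio α x y = 1 := by
      intro x y hxy
      rcases hα x with ⟨h0, h1⟩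
      unfold ratio
      have hne : (1 - α x) * α x ≠ 0 := ne_of_gt (mul_pos (by linarith) h0)
      rw [hxy, div_eq_one_iff_eq hne]
      ring
    have hc' : ∀ x, α (x + -e₀) = α x := by
      intro x
      have h' := hc (x + -e₀)
      rw [harg x] at h'
      exact h'.symm
    have hterm : ∀ (e : Zd 2), (∀ x, α (x + e) = α x) → ∀ x,
        ratio α x (x + e) * Jf μ f x (x + e) - Jf μ f (x + e) x = h (x + e) - h x := by
      intro e hce x
      rw [hr x (x + e) (hce x), one_mul, J_sub hμ f F hf]
      simp only [hh, hg, hce x]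
      ring
    have hsum : ∀ (e : Zd 2), e ∈ dirs → (∀ x, α (x + e) = α x) →
        ∑ x ∈ Rset F, (ratio α x (x + e) * Jf μ f x (x + e) - Jf μ f (x + e) x) = 0 := by
      intro e he hce
      have hFsub : F ⊆ (Rset F).image (fun z => z + e) := by
        intro z hz
        exact Finset.mem_image.2 ⟨z + -e, image_subset_Rset F (-e) (neg_mem_dirs e he)
          (Finset.mem_image.2 ⟨z, hz, rfl⟩), by abel⟩
      rw [Finset.sum_congr rfl (fun x _ => hterm e hce x), Finset.sum_sub_distrib,
        sum_shift h (Rset F) e, sum_supp h F _ hsupp hFsub,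
        sum_supp h F _ hsupp (subset_Rset F), sub_self]
    have h1 := hsum e₀ he₀ hc
    have h2 := hsum (-e₀) he₀' hc'
    rw [Finset.sum_add_distrib, ← Finset.mul_sum, ← Finset.mul_sum, h1, h2]
    ring
  · -- detailed-balance case
    have hπpos := pifun_pos hα
    have hppqq : pp / qq ≠ 0 := ne_of_gt (div_pos hpp hqq)
    have hr1 : ∀ x, ratio α x (x + e₀) = qq / pp := by
      intro x
      rw [ratio_eq_pifun_div hα, hc x]
      rw [div_mul_eq_div_div_swap]
      field_simp [ne_of_gt (hπpos x)]
    have hr2 : ∀ x, ratio α x (x + -e₀) = pp / qq := by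
      intro x
      have h := hc (x + -e₀)
      rw [harg x] at h
      rw [ratio_eq_pifun_div hα, h]
      field_simp [ne_of_gt (hπpos (x + -e₀))]
    set u : Zd 2 → ℝ := fun z => qq * Jf μ f z (z + e₀) - pp * Jf μ f (z + e₀) z with hu
    have hterm1 : ∀ x, pp * (ratio α x (x + e₀) * Jf μ f x (x + e₀) - Jf μ f (x + e₀) x)
        = u x := by
      intro x
      rw [hr1 x]
      simp only [hu]
      field_simp
    have hterm2 : ∀ x, qq * (ratio α x (x + -e₀) * Jf μ f x (x + -e₀) - Jf μ f (x + -e₀) x)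
        = -u (x + -e₀) := by
      intro x
      rw [hr2 x]
      simp only [hu, harg x]
      field_simp
      ring
    have hsupp : ∀ z, z ∉ F → z + e₀ ∉ F → u z = 0 := by
      intro z hz hz'
      have h := ratio_J_eq hμ hα f F hf z (z + e₀) (hxne z) hz hz'
      rw [hr1 z] at h
      simp only [hu]
      have : qq * Jf μ f z (z + e₀) = pp * Jf μ f (z + e₀) z := by
        field_simp at h
        linarith [h]
      linarith
    set D : Finset (Zd 2) := F ∪ F.image (fun z => z + -e₀) with hD
    have hsuppD : ∀ z ∉ D, u z = 0 := by
      intro z hz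
      apply hsupp
      · exact fun h => hz (Finset.mem_union_left _ h)
      · intro h
        exact hz (Finset.mem_union_right _ (Finset.mem_image.2 ⟨z + e₀, h, by abel⟩))
    have hD1 : D ⊆ Rset F := by
      rw [hD]
      apply Finset.union_subset (subset_Rset F) (image_subset_Rset F (-e₀) he₀')
    have hD2 : D ⊆ (Rset F).image (fun z => z + -e₀) := by
      intro z hz
      have hz' : z + e₀ ∈ Rset F := by
        rcases Finset.mem_union.1 hz with h | h
        · exact image_subset_Rset F e₀ he₀ (Finset.mem_image.2 ⟨z, h, rfl⟩)
        · rcases Finset.mem_image.1 h with ⟨a, ha, rfl⟩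
          rw [show a + -e₀ + e₀ = a from harg a]
          exact subset_Rset F ha
      exact Finset.mem_image.2 ⟨z + e₀, hz', by abel⟩
    rw [Finset.sum_congr rfl (fun x _ =>
        show pp * (ratio α x (x + e₀) * Jf μ f x (x + e₀) - Jf μ f (x + e₀) x)
          + qq * (ratio α x (x + -e₀) * Jf μ f x (x + -e₀) - Jf μ f (x + -e₀) x)
          = u x - u (x + -e₀) from by rw [hterm1 x, hterm2 x]; ring),
      Finset.sum_sub_distrib, sum_shift u (Rset F) (-e₀),
      sum_supp u D _ hsuppD hD2, sum_supp u D _ hsuppD hD1, sub_self]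




lemma backward (hμ : IsProductWith α μ) (hα : ∀ x, α x ∈ Set.Ioo (0:ℝ) 1)
    (p : Zd 2 → ℝ) (hp0 : ∀ z ∉ dirs, p z = 0)
    (hpE1 : 0 < p E1) (hpE1' : 0 < p (-E1)) (hpE2 : 0 < p E2) (hpE2' : 0 < p (-E2))
    (hd1 : (∀ x, α (x + E1) = α x) ∨ (∀ x, pifun α (x + E1) = (p E1 / p (-E1)) * pifun α x))
    (hd2 : (∀ x, α (x + E2) = α x) ∨ (∀ x, pifun α (x + E2) = (p E2 / p (-E2)) * pifun α x)) :
    IsStationary p μ := by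
  intro f hfc
  obtain ⟨F, hf⟩ := hfc
  rw [integral_gen hμ hα p hp0 f F hf (Rset F) subset_rfl]
  rw [Finset.sum_congr rfl (fun x (_ : x ∈ Rset F) => sum_dirs
    (fun e => p e * (ratio α x (x + e) * Jf μ f x (x + e) - Jf μ f (x + e) x)))]
  rw [Finset.sum_add_distrib,
    dir_sum_zero hμ hα f F hf E1 (by decide) _ _ hpE1 hpE1' hd1,
    dir_sum_zero hμ hα f F hf E2 (by decide) _ _ hpE2 hpE2' hd2, add_zero]

lemma add_E1_0 (x : Zd 2) : (x + E1) 0 = x 0 + 1 := by simp [E1]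
lemma add_E1_1 (x : Zd 2) : (x + E1) 1 = x 1 := by simp [E1]
lemma add_E2_0 (x : Zd 2) : (x + E2) 0 = x 0 := by simp [E2]
lemma add_E2_1 (x : Zd 2) : (x + E2) 1 = x 1 + 1 := by simp [E2]

lemma backward_full (hμ : IsProductWith α μ) (hα : ∀ x, α x ∈ Set.Ioo (0:ℝ) 1)
    (p : Zd 2 → ℝ) (p₁ p₂ q₁ q₂ : ℝ)
    (hp₁ : 0 < p₁) (hp₂ : 0 < p₂) (hq₁ : 0 < q₁) (hq₂ : 0 < q₂)
    (he₁ : p E1 = p₁) (he₂ : p E2 = p₂) (he₁' : p (-E1) = q₁) (he₂' : p (-E2) = q₂)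
    (hp0 : ∀ z ∉ dirs, p z = 0)
    (h4 : (pifun α = fun _ => 1) ∨
      (pifun α = fun x : Zd 2 => (p₁ / q₁) ^ (x 0)) ∨
      (pifun α = fun x : Zd 2 => (p₂ / q₂) ^ (x 1)) ∨
      (pifun α = fun x : Zd 2 => (p₁ / q₁) ^ (x 0) * (p₂ / q₂) ^ (x 1))) :
    IsStationary p μ := by
  have hr1 : (p₁ / q₁ : ℝ) ≠ 0 := ne_of_gt (div_pos hp₁ hq₁)
  have hr2 : (p₂ / q₂ : ℝ) ≠ 0 := ne_of_gt (div_pos hp₂ hq₂)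
  apply backward hμ hα p hp0 (by rw [he₁]; exact hp₁) (by rw [he₁']; exact hq₁)
    (by rw [he₂]; exact hp₂) (by rw [he₂']; exact hq₂)
  · -- direction 1 dichotomy
    rcases h4 with h | h | h | h
    · left; intro x; apply alpha_eq_of_pifun_eq hα; rw [h]
    · right; intro x
      rw [he₁, he₁', h]
      show (p₁/q₁) ^ ((x + E1) 0) = (p₁/q₁) * (p₁/q₁) ^ (x 0)
      rw [add_E1_0, zpow_add₀ hr1, zpow_one, mul_comm]
    · left; intro x; apply alpha_eq_of_pifun_eq hα; rw [h]
      show (p₂/q₂) ^ ((x + E1) 1) = (p₂/q₂) ^ (x 1)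
      rw [add_E1_1]
    · right; intro x
      rw [he₁, he₁', h]
      show (p₁/q₁) ^ ((x + E1) 0) * (p₂/q₂) ^ ((x + E1) 1)
        = (p₁/q₁) * ((p₁/q₁) ^ (x 0) * (p₂/q₂) ^ (x 1))
      rw [add_E1_0, add_E1_1, zpow_add₀ hr1, zpow_one]
      ring
  · -- direction 2 dichotomy
    rcases h4 with h | h | h | h
    · left; intro x; apply alpha_eq_of_pifun_eq hα; rw [h]
    · left; intro x; apply alpha_eq_of_pifun_eq hα; rw [h]
      show (p₁/q₁) ^ ((x + E2) 0) = (p₁/q₁) ^ (x 0)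
      rw [add_E2_0]
    · right; intro x
      rw [he₂, he₂', h]
      show (p₂/q₂) ^ ((x + E2) 1) = (p₂/q₂) * (p₂/q₂) ^ (x 1)
      rw [add_E2_1, zpow_add₀ hr2, zpow_one, mul_comm]
    · right; intro x
      rw [he₂, he₂', h]
      show (p₁/q₁) ^ ((x + E2) 0) * (p₂/q₂) ^ ((x + E2) 1)
        = (p₂/q₂) * ((p₁/q₁) ^ (x 0) * (p₂/q₂) ^ (x 1))
      rw [add_E2_0, add_E2_1, zpow_add₀ hr2, zpow_one]
      ring


lemma int_one (hμ : IsProductWith α μ) : ∫ _η, (1:ℝ) ∂μ = 1 := by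
  haveI := hμ.1
  simp

lemma mom1 (hμ : IsProductWith α μ) (hα : ∀ x, α x ∈ Set.Ioo (0:ℝ) 1) (a : Zd 2) :
    ∫ η, ind (η a) ∂μ = α a := by
  have h := int_mul_ind hμ hα (fun _ => 1) ∅ (fun _ _ _ => rfl) a (Finset.notMem_empty a)
  simp only [one_mul] at h
  rw [h, int_one hμ, mul_one]

lemma cylP1 (a : Zd 2) : ∀ η η' : Conf 2, (∀ x ∈ ({a} : Finset (Zd 2)), η x = η' x) →
    ind (η a) = ind (η' a) := by
  intro η η' h
  rw [h a (Finset.mem_singleton_self a)]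

lemma cylP2 (a b : Zd 2) : ∀ η η' : Conf 2, (∀ x ∈ ({a, b} : Finset (Zd 2)), η x = η' x) →
    ind (η a) * ind (η b) = ind (η' a) * ind (η' b) := by
  intro η η' h
  rw [h a (by simp), h b (by simp)]

lemma mom2 (hμ : IsProductWith α μ) (hα : ∀ x, α x ∈ Set.Ioo (0:ℝ) 1) (a b : Zd 2)
    (hab : a ≠ b) : ∫ η, ind (η a) * ind (η b) ∂μ = α a * α b := by
  rw [int_mul_ind hμ hα (fun η => ind (η a)) {a} (cylP1 a) b
    (by simp [Ne.symm hab]), mom1 hμ hα, mul_comm]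

-- J evaluations for f₁ = ind (η u)
lemma J1_x (hμ : IsProductWith α μ) (u y : Zd 2) :
    Jf μ (fun η => ind (η u)) u y = 0 := by
  unfold Jf
  rw [show (fun η : Conf 2 => ind (η u) * ind (η y) * (1 - ind (η u))) =
    fun _ => (0:ℝ) from funext (fun η => by cases h : η u <;> simp [ind, h])]
  exact integral_zero _ _

lemma J1_yu (hμ : IsProductWith α μ) (hα : ∀ x, α x ∈ Set.Ioo (0:ℝ) 1) (u x : Zd 2)
    (hxu : x ≠ u) : Jf μ (fun η => ind (η u)) x u = α u * (1 - α x) := by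
  unfold Jf
  rw [show (fun η : Conf 2 => ind (η u) * ind (η u) * (1 - ind (η x))) =
    fun η : Conf 2 => ind (η u) * (1 - ind (η x)) from
      funext (fun η => by cases h : η u <;> simp [ind, h])]
  rw [int_mul_one_sub_ind hμ hα (fun η => ind (η u)) {u} (cylP1 u) x (by simp [hxu]),
    mom1 hμ hα, mul_comm]

lemma J1_gen (hμ : IsProductWith α μ) (hα : ∀ x, α x ∈ Set.Ioo (0:ℝ) 1) (u x y : Zd 2)
    (hxu : x ≠ u) (hyu : y ≠ u) (hxy : x ≠ y) :
    Jf μ (fun η => ind (η u)) x y = α u * α y * (1 - α x) := by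
  unfold Jf
  rw [int_mul_one_sub_ind hμ hα (fun η => ind (η u) * ind (η y)) {u, y} (cylP2 u y) x
    (by simp [hxu, hxy]), mom2 hμ hα u y (Ne.symm hyu), mul_comm]

-- J evaluations for f₂ = ind (η u) * ind (η v)
lemma J2_xu (hμ : IsProductWith α μ) (u v y : Zd 2) :
    Jf μ (fun η => ind (η u) * ind (η v)) u y = 0 := by
  unfold Jf
  rw [show (fun η : Conf 2 => ind (η u) * ind (η v) * ind (η y) * (1 - ind (η u))) =
    fun _ => (0:ℝ) from funext (fun η => by cases h : η u <;> simp [ind, h])]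
  exact integral_zero _ _

lemma J2_xv (hμ : IsProductWith α μ) (u v y : Zd 2) :
    Jf μ (fun η => ind (η u) * ind (η v)) v y = 0 := by
  unfold Jf
  rw [show (fun η : Conf 2 => ind (η u) * ind (η v) * ind (η y) * (1 - ind (η v))) =
    fun _ => (0:ℝ) from funext (fun η => by cases h : η v <;> simp [ind, h])]
  exact integral_zero _ _

lemma J2_yu (hμ : IsProductWith α μ) (hα : ∀ x, α x ∈ Set.Ioo (0:ℝ) 1) (u v x : Zd 2)
    (huv : u ≠ v) (hxu : x ≠ u) (hxv : x ≠ v) :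
    Jf μ (fun η => ind (η u) * ind (η v)) x u = α u * α v * (1 - α x) := by
  unfold Jf
  rw [show (fun η : Conf 2 => ind (η u) * ind (η v) * ind (η u) * (1 - ind (η x))) =
    fun η : Conf 2 => ind (η u) * ind (η v) * (1 - ind (η x)) from
      funext (fun η => by cases h : η u <;> simp [ind, h])]
  rw [int_mul_one_sub_ind hμ hα (fun η => ind (η u) * ind (η v)) {u, v} (cylP2 u v) x
    (by simp [hxu, hxv]), mom2 hμ hα u v huv, mul_comm]

lemma J2_yv (hμ : IsProductWith α μ) (hα : ∀ x, α x ∈ Set.Ioo (0:ℝ) 1) (u v x : Zd 2)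
    (huv : u ≠ v) (hxu : x ≠ u) (hxv : x ≠ v) :
    Jf μ (fun η => ind (η u) * ind (η v)) x v = α u * α v * (1 - α x) := by
  unfold Jf
  rw [show (fun η : Conf 2 => ind (η u) * ind (η v) * ind (η v) * (1 - ind (η x))) =
    fun η : Conf 2 => ind (η u) * ind (η v) * (1 - ind (η x)) from
      funext (fun η => by cases h : η v <;> simp [ind, h])]
  rw [int_mul_one_sub_ind hμ hα (fun η => ind (η u) * ind (η v)) {u, v} (cylP2 u v) x
    (by simp [hxu, hxv]), mom2 hμ hα u v huv, mul_comm]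

lemma ratio_cancel (hα : ∀ x, α x ∈ Set.Ioo (0:ℝ) 1) (x y : Zd 2) :
    ratio α x y * (α y * (1 - α x)) = α x * (1 - α y) := by
  rcases hα x with ⟨hx0, hx1⟩
  rcases hα y with ⟨hy0, hy1⟩
  have hne : (1 - α x) * α y ≠ 0 := ne_of_gt (mul_pos (by linarith) hy0)
  unfold ratio
  rw [mul_comm (α y) (1 - α x), div_mul_cancel₀ _ hne]


lemma condA (hμ : IsProductWith α μ) (hα : ∀ x, α x ∈ Set.Ioo (0:ℝ) 1)
    (p : Zd 2 → ℝ) (hp0 : ∀ z ∉ dirs, p z = 0) (hstat : IsStationary p μ) (u : Zd 2) :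
    (p E1 * (α (u + -E1) * (1 - α u)) + p (-E1) * (α (u + E1) * (1 - α u))
      + p E2 * (α (u + -E2) * (1 - α u)) + p (-E2) * (α (u + E2) * (1 - α u)))
    - (p E1 * (α u * (1 - α (u + E1))) + p (-E1) * (α u * (1 - α (u + -E1)))
      + p E2 * (α u * (1 - α (u + E2))) + p (-E2) * (α u * (1 - α (u + -E2)))) = 0 := by
  have hf := cylP1 u
  have h0 := hstat (fun η => ind (η u)) ⟨{u}, hf⟩
  rw [integral_gen hμ hα p hp0 _ {u} hf (Rset {u}) subset_rfl, Finset.sum_comm] at h0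
  have hsum : ∀ e ∈ dirs, (∑ x ∈ Rset {u}, p e * (ratio α x (x + e) *
        Jf μ (fun η => ind (η u)) x (x + e) - Jf μ (fun η => ind (η u)) (x + e) x))
      = p e * (α (u + -e) * (1 - α u)) - p e * (α u * (1 - α (u + e))) := by
    intro e he
    have he' : e ≠ 0 := dirs_ne_zero e he
    have harg : u + -e + e = u := by abel
    have hvan : ∀ z, z ∉ (insert u {u + -e} : Finset (Zd 2)) →
        p e * (ratio α z (z + e) * Jf μ (fun η => ind (η u)) z (z + e)
          - Jf μ (fun η => ind (η u)) (z + e) z) = 0 := by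
      intro z hz
      simp only [Finset.mem_insert, Finset.mem_singleton] at hz
      push_neg at hz
      have h3 : z + e ≠ u := fun h => hz.2 (by linear_combination h)
      have hze : z ≠ z + e := fun h => he' (by linear_combination -h)
      rw [ratio_J_eq hμ hα _ {u} hf z (z + e) hze (by simp [hz.1]) (by simp [h3]),
        sub_self, mul_zero]
    have hDR : (insert u {u + -e} : Finset (Zd 2)) ⊆ Rset {u} := by
      refine Finset.insert_subset (subset_Rset {u} (by simp)) ?_
      refine Finset.singleton_subset_iff.2 ?_
      exact image_subset_Rset {u} (-e) (neg_mem_dirs e he) (Finset.mem_image.2 ⟨u, by simp, rfl⟩)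
    rw [sum_supp _ _ _ hvan hDR, Finset.sum_insert (by
      simp only [Finset.mem_singleton]
      intro h
      exact he' (by linear_combination h)), Finset.sum_singleton, harg]
    have hne1 : u + e ≠ u := fun h => he' (by linear_combination h)
    have hne2 : u + -e ≠ u := fun h => he' (by linear_combination -h)
    rw [J1_x hμ u (u + e), J1_yu hμ hα u (u + e) hne1, J1_yu hμ hα u (u + -e) hne2,
      J1_x hμ u (u + -e), ratio_cancel hα (u + -e) u]
    ring
  rw [Finset.sum_congr rfl hsum, sum_dirs] at h0
  simp only [neg_neg] at h0
  linear_combination h0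

lemma condB_E1 (hμ : IsProductWith α μ) (hα : ∀ x, α x ∈ Set.Ioo (0:ℝ) 1)
    (p : Zd 2 → ℝ) (hp0 : ∀ z ∉ dirs, p z = 0) (hstat : IsStationary p μ) (u : Zd 2) :
    (α (u + E1) - α u) * (p E1 * (α u * (1 - α (u + E1)))
      - p (-E1) * (α (u + E1) * (1 - α u))) = 0 := by
  have hf := cylP2 u (u + E1)
  have h0 := hstat (fun η => ind (η u) * ind (η (u + E1))) ⟨{u, u + E1}, hf⟩
  rw [integral_gen hμ hα p hp0 _ {u, u + E1} hf (Rset {u, u + E1}) subset_rfl,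
    Finset.sum_comm] at h0
  -- site inequalities
  have hq1 : u ≠ u + E1 := fun h => (by decide : (E1:Zd 2) ≠ 0) (by linear_combination -h)
  have hq1' : u + E1 ≠ u := fun h => (by decide : (E1:Zd 2) ≠ 0) (by linear_combination h)
  have hq2 : u ≠ u + -E1 := fun h => (by decide : (E1:Zd 2) ≠ 0) (by linear_combination h)
  have hq2' : u + -E1 ≠ u := fun h => (by decide : (E1:Zd 2) ≠ 0) (by linear_combination -h)
  have hq3 : u + E1 ≠ u + -E1 := fun h =>
    (by decide : (E1+E1:Zd 2) ≠ 0) (by linear_combination h)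
  have hq3' : u + -E1 ≠ u + E1 := fun h =>
    (by decide : (E1+E1:Zd 2) ≠ 0) (by linear_combination -h)
  have hq4 : u + E1 + E1 ≠ u := fun h =>
    (by decide : (E1+E1:Zd 2) ≠ 0) (by linear_combination h)
  have hq4' : u ≠ u + E1 + E1 := fun h =>
    (by decide : (E1+E1:Zd 2) ≠ 0) (by linear_combination -h)
  have hq5 : u + E1 + E1 ≠ u + E1 := fun h =>
    (by decide : (E1:Zd 2) ≠ 0) (by linear_combination h)
  have hq5' : u + E1 ≠ u + E1 + E1 := fun h =>
    (by decide : (E1:Zd 2) ≠ 0) (by linear_combination -h)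
  have hq6 : u + E2 ≠ u := fun h => (by decide : (E2:Zd 2) ≠ 0) (by linear_combination h)
  have hq6' : u ≠ u + E2 := fun h => (by decide : (E2:Zd 2) ≠ 0) (by linear_combination -h)
  have hq7 : u + E2 ≠ u + E1 := fun h =>
    (by decide : (E2 + -E1:Zd 2) ≠ 0) (by linear_combination h)
  have hq7' : u + E1 ≠ u + E2 := fun h =>
    (by decide : (E2 + -E1:Zd 2) ≠ 0) (by linear_combination -h)
  have hq8 : u + -E2 ≠ u := fun h => (by decide : (E2:Zd 2) ≠ 0) (by linear_combination -h)
  have hq8' : u ≠ u + -E2 := fun h => (by decide : (E2:Zd 2) ≠ 0) (by linear_combination h)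
  have hq9 : u + -E2 ≠ u + E1 := fun h =>
    (by decide : (E2 + E1:Zd 2) ≠ 0) (by linear_combination -h)
  have hq9' : u + E1 ≠ u + -E2 := fun h =>
    (by decide : (E2 + E1:Zd 2) ≠ 0) (by linear_combination h)
  have hq10 : u + E1 + E2 ≠ u := fun h =>
    (by decide : (E1 + E2:Zd 2) ≠ 0) (by linear_combination h)
  have hq10' : u ≠ u + E1 + E2 := fun h =>
    (by decide : (E1 + E2:Zd 2) ≠ 0) (by linear_combination -h)
  have hq11 : u + E1 + E2 ≠ u + E1 := fun h =>
    (by decide : (E2:Zd 2) ≠ 0) (by linear_combination h)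
  have hq11' : u + E1 ≠ u + E1 + E2 := fun h =>
    (by decide : (E2:Zd 2) ≠ 0) (by linear_combination -h)
  have hq12 : u + E1 + -E2 ≠ u := fun h =>
    (by decide : (E1 + -E2:Zd 2) ≠ 0) (by linear_combination h)
  have hq12' : u ≠ u + E1 + -E2 := fun h =>
    (by decide : (E1 + -E2:Zd 2) ≠ 0) (by linear_combination -h)
  have hq13 : u + E1 + -E2 ≠ u + E1 := fun h =>
    (by decide : (E2:Zd 2) ≠ 0) (by linear_combination -h)
  have hq13' : u + E1 ≠ u + E1 + -E2 := fun h =>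
    (by decide : (E2:Zd 2) ≠ 0) (by linear_combination h)
  have hq14 : u + -E2 ≠ u + E1 + -E2 := fun h =>
    (by decide : (E1:Zd 2) ≠ 0) (by linear_combination -h)
  have hq15 : u + E2 ≠ u + E1 + E2 := fun h =>
    (by decide : (E1:Zd 2) ≠ 0) (by linear_combination -h)
  -- memberships in Rset
  have mF1 : u ∈ ({u, u + E1} : Finset (Zd 2)) := by simp
  have mF2 : u + E1 ∈ ({u, u + E1} : Finset (Zd 2)) := by simp
  have mR1 : u ∈ Rset {u, u + E1} := subset_Rset _ mF1
  have mR2 : u + E1 ∈ Rset {u, u + E1} := subset_Rset _ mF2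
  have mR : ∀ (w : Zd 2), w ∈ ({u, u + E1} : Finset (Zd 2)) → ∀ e ∈ dirs,
      w + e ∈ Rset {u, u + E1} := by
    intro w hw e he
    exact image_subset_Rset _ e he (Finset.mem_image.2 ⟨w, hw, rfl⟩)
  -- generic vanishing
  have hvan : ∀ e ∈ dirs, ∀ z, z ≠ u → z ≠ u + E1 → z + e ≠ u → z + e ≠ u + E1 →
      p e * (ratio α z (z + e) * Jf μ (fun η => ind (η u) * ind (η (u + E1))) z (z + e)
        - Jf μ (fun η => ind (η u) * ind (η (u + E1))) (z + e) z) = 0 := by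
    intro e he z h1 h2 h3 h4
    have hze : z ≠ z + e := fun h => dirs_ne_zero e he (by linear_combination -h)
    rw [ratio_J_eq hμ hα _ {u, u + E1} hf z (z + e) hze (by simp [h1, h2]) (by simp [h3, h4]),
      sub_self, mul_zero]
  -- inner sums for each direction
  have hsE1 : (∑ x ∈ Rset {u, u + E1},
      p E1 * (ratio α x (x + E1) * Jf μ (fun η => ind (η u) * ind (η (u + E1))) x (x + E1)
        - Jf μ (fun η => ind (η u) * ind (η (u + E1))) (x + E1) x))
      = p E1 * (α (u + E1) * (α (u + -E1) * (1 - α u)))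
        - p E1 * (α u * α (u + E1) * (1 - α (u + E1 + E1))) := by
    have hD : ∀ z, z ∉ (insert u (insert (u + E1) {u + -E1}) : Finset (Zd 2)) →
        p E1 * (ratio α z (z + E1) * Jf μ (fun η => ind (η u) * ind (η (u + E1))) z (z + E1)
          - Jf μ (fun η => ind (η u) * ind (η (u + E1))) (z + E1) z) = 0 := by
      intro z hz
      simp only [Finset.mem_insert, Finset.mem_singleton] at hz
      push_neg at hz
      exact hvan E1 (by decide) z hz.1 hz.2.1
        (fun h => hz.2.2 (by linear_combination h)) (fun h => hz.1 (by linear_combination h))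
    rw [sum_supp _ _ _ hD (by
      refine Finset.insert_subset mR1 (Finset.insert_subset mR2 ?_)
      exact Finset.singleton_subset_iff.2 (mR u mF1 (-E1) (by decide)))]
    rw [Finset.sum_insert (by
        simp only [Finset.mem_insert, Finset.mem_singleton]
        push_neg
        exact ⟨hq1, hq2⟩),
      Finset.sum_insert (by simp only [Finset.mem_singleton]; exact hq3),
      Finset.sum_singleton]
    rw [show u + -E1 + E1 = u from by abel]
    rw [J2_xu hμ u (u + E1) (u + E1), J2_xv hμ u (u + E1) (u + E1 + E1),
      J2_xv hμ u (u + E1) u, J2_xu hμ u (u + E1) (u + -E1),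
      J2_yv hμ hα u (u + E1) (u + E1 + E1) hq1 hq4 hq5,
      J2_yu hμ hα u (u + E1) (u + -E1) hq1 hq2' hq3']
    have hrc : ratio α (u + -E1) u * (α u * α (u + E1) * (1 - α (u + -E1)))
        = α (u + E1) * (α (u + -E1) * (1 - α u)) := by
      linear_combination α (u + E1) * ratio_cancel hα (u + -E1) u
    linear_combination hrc * p E1
  have hsmE1 : (∑ x ∈ Rset {u, u + E1},
      p (-E1) * (ratio α x (x + -E1) * Jf μ (fun η => ind (η u) * ind (η (u + E1))) x (x + -E1)
        - Jf μ (fun η => ind (η u) * ind (η (u + E1))) (x + -E1) x))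
      = p (-E1) * (α u * (α (u + E1 + E1) * (1 - α (u + E1))))
        - p (-E1) * (α u * α (u + E1) * (1 - α (u + -E1))) := by
    have hD : ∀ z, z ∉ (insert u (insert (u + E1) {u + E1 + E1}) : Finset (Zd 2)) →
        p (-E1) * (ratio α z (z + -E1) * Jf μ (fun η => ind (η u) * ind (η (u + E1))) z (z + -E1)
          - Jf μ (fun η => ind (η u) * ind (η (u + E1))) (z + -E1) z) = 0 := by
      intro z hz
      simp only [Finset.mem_insert, Finset.mem_singleton] at hz
      push_neg at hz
      exact hvan (-E1) (by decide) z hz.1 hz.2.1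
        (fun h => hz.2.1 (by linear_combination h)) (fun h => hz.2.2 (by linear_combination h))
    rw [sum_supp _ _ _ hD (by
      refine Finset.insert_subset mR1 (Finset.insert_subset mR2 ?_)
      refine Finset.singleton_subset_iff.2 ?_
      have := mR (u + E1) mF2 E1 (by decide)
      exact this)]
    rw [Finset.sum_insert (by
        simp only [Finset.mem_insert, Finset.mem_singleton]
        push_neg
        exact ⟨hq1, hq4'⟩),
      Finset.sum_insert (by simp only [Finset.mem_singleton]; exact hq5'),
      Finset.sum_singleton]
    rw [show u + E1 + -E1 = u from by abel, show u + E1 + E1 + -E1 = u + E1 from by abel]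
    rw [J2_xu hμ u (u + E1) (u + -E1), J2_xv hμ u (u + E1) u, J2_xu hμ u (u + E1) (u + E1),
      J2_xv hμ u (u + E1) (u + E1 + E1),
      J2_yu hμ hα u (u + E1) (u + -E1) hq1 hq2' hq3',
      J2_yv hμ hα u (u + E1) (u + E1 + E1) hq1 hq4 hq5]
    have hrc : ratio α (u + E1 + E1) (u + E1) * (α u * α (u + E1) * (1 - α (u + E1 + E1)))
        = α u * (α (u + E1 + E1) * (1 - α (u + E1))) := by
      linear_combination α u * ratio_cancel hα (u + E1 + E1) (u + E1)
    linear_combination hrc * p (-E1)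
  have hsE2 : (∑ x ∈ Rset {u, u + E1},
      p E2 * (ratio α x (x + E2) * Jf μ (fun η => ind (η u) * ind (η (u + E1))) x (x + E2)
        - Jf μ (fun η => ind (η u) * ind (η (u + E1))) (x + E2) x))
      = p E2 * (α (u + E1) * (α (u + -E2) * (1 - α u)))
        + p E2 * (α u * (α (u + E1 + -E2) * (1 - α (u + E1))))
        - p E2 * (α u * α (u + E1) * (1 - α (u + E2)))
        - p E2 * (α u * α (u + E1) * (1 - α (u + E1 + E2))) := by
    have hD : ∀ z, z ∉ (insert u (insert (u + E1) (insert (u + -E2) {u + E1 + -E2}))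
          : Finset (Zd 2)) →
        p E2 * (ratio α z (z + E2) * Jf μ (fun η => ind (η u) * ind (η (u + E1))) z (z + E2)
          - Jf μ (fun η => ind (η u) * ind (η (u + E1))) (z + E2) z) = 0 := by
      intro z hz
      simp only [Finset.mem_insert, Finset.mem_singleton] at hz
      push_neg at hz
      exact hvan E2 (by decide) z hz.1 hz.2.1
        (fun h => hz.2.2.1 (by linear_combination h))
        (fun h => hz.2.2.2 (by linear_combination h))
    rw [sum_supp _ _ _ hD (by
      refine Finset.insert_subset mR1 (Finset.insert_subset mR2
        (Finset.insert_subset (mR u mF1 (-E2) (by decide)) ?_))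
      exact Finset.singleton_subset_iff.2 (mR (u + E1) mF2 (-E2) (by decide)))]
    rw [Finset.sum_insert (by
        simp only [Finset.mem_insert, Finset.mem_singleton]
        push_neg
        exact ⟨hq1, hq8', hq12'⟩),
      Finset.sum_insert (by
        simp only [Finset.mem_insert, Finset.mem_singleton]
        push_neg
        exact ⟨hq9', hq13'⟩),
      Finset.sum_insert (by simp only [Finset.mem_singleton]; exact hq14),
      Finset.sum_singleton]
    rw [show u + -E2 + E2 = u from by abel, show u + E1 + -E2 + E2 = u + E1 from by abel]
    rw [J2_xu hμ u (u + E1) (u + E2), J2_xv hμ u (u + E1) (u + E1 + E2),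
      J2_xu hμ u (u + E1) (u + -E2), J2_xv hμ u (u + E1) (u + E1 + -E2),
      J2_yu hμ hα u (u + E1) (u + E2) hq1 hq6 hq7,
      J2_yv hμ hα u (u + E1) (u + E1 + E2) hq1 hq10 hq11,
      J2_yu hμ hα u (u + E1) (u + -E2) hq1 hq8 hq9,
      J2_yv hμ hα u (u + E1) (u + E1 + -E2) hq1 hq12 hq13]
    have hrc1 : ratio α (u + -E2) u * (α u * α (u + E1) * (1 - α (u + -E2)))
        = α (u + E1) * (α (u + -E2) * (1 - α u)) := by
      linear_combination α (u + E1) * ratio_cancel hα (u + -E2) u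
    have hrc2 : ratio α (u + E1 + -E2) (u + E1) *
          (α u * α (u + E1) * (1 - α (u + E1 + -E2)))
        = α u * (α (u + E1 + -E2) * (1 - α (u + E1))) := by
      linear_combination α u * ratio_cancel hα (u + E1 + -E2) (u + E1)
    linear_combination (hrc1 + hrc2) * p E2
  have hsmE2 : (∑ x ∈ Rset {u, u + E1},
      p (-E2) * (ratio α x (x + -E2) * Jf μ (fun η => ind (η u) * ind (η (u + E1))) x (x + -E2)
        - Jf μ (fun η => ind (η u) * ind (η (u + E1))) (x + -E2) x))
      = p (-E2) * (α (u + E1) * (α (u + E2) * (1 - α u)))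
        + p (-E2) * (α u * (α (u + E1 + E2) * (1 - α (u + E1))))
        - p (-E2) * (α u * α (u + E1) * (1 - α (u + -E2)))
        - p (-E2) * (α u * α (u + E1) * (1 - α (u + E1 + -E2))) := by
    have hD : ∀ z, z ∉ (insert u (insert (u + E1) (insert (u + E2) {u + E1 + E2}))
          : Finset (Zd 2)) →
        p (-E2) * (ratio α z (z + -E2) * Jf μ (fun η => ind (η u) * ind (η (u + E1))) z (z + -E2)
          - Jf μ (fun η => ind (η u) * ind (η (u + E1))) (z + -E2) z) = 0 := by
      intro z hz
      simp only [Finset.mem_insert, Finset.mem_singleton] at hz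
      push_neg at hz
      exact hvan (-E2) (by decide) z hz.1 hz.2.1
        (fun h => hz.2.2.1 (by linear_combination h))
        (fun h => hz.2.2.2 (by linear_combination h))
    rw [sum_supp _ _ _ hD (by
      refine Finset.insert_subset mR1 (Finset.insert_subset mR2
        (Finset.insert_subset (mR u mF1 E2 (by decide)) ?_))
      exact Finset.singleton_subset_iff.2 (mR (u + E1) mF2 E2 (by decide)))]
    rw [Finset.sum_insert (by
        simp only [Finset.mem_insert, Finset.mem_singleton]
        push_neg
        exact ⟨hq1, hq6', hq10'⟩),
      Finset.sum_insert (by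
        simp only [Finset.mem_insert, Finset.mem_singleton]
        push_neg
        exact ⟨hq7', hq11'⟩),
      Finset.sum_insert (by simp only [Finset.mem_singleton]; exact hq15),
      Finset.sum_singleton]
    rw [show u + E2 + -E2 = u from by abel, show u + E1 + E2 + -E2 = u + E1 from by abel]
    rw [J2_xu hμ u (u + E1) (u + -E2), J2_xv hμ u (u + E1) (u + E1 + -E2),
      J2_xu hμ u (u + E1) (u + E2), J2_xv hμ u (u + E1) (u + E1 + E2),
      J2_yu hμ hα u (u + E1) (u + -E2) hq1 hq8 hq9,
      J2_yv hμ hα u (u + E1) (u + E1 + -E2) hq1 hq12 hq13,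
      J2_yu hμ hα u (u + E1) (u + E2) hq1 hq6 hq7,
      J2_yv hμ hα u (u + E1) (u + E1 + E2) hq1 hq10 hq11]
    have hrc1 : ratio α (u + E2) u * (α u * α (u + E1) * (1 - α (u + E2)))
        = α (u + E1) * (α (u + E2) * (1 - α u)) := by
      linear_combination α (u + E1) * ratio_cancel hα (u + E2) u
    have hrc2 : ratio α (u + E1 + E2) (u + E1) *
          (α u * α (u + E1) * (1 - α (u + E1 + E2)))
        = α u * (α (u + E1 + E2) * (1 - α (u + E1))) := by
      linear_combination α u * ratio_cancel hα (u + E1 + E2) (u + E1)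
    linear_combination (hrc1 + hrc2) * p (-E2)
  rw [sum_dirs] at h0
  rw [hsE1, hsmE1, hsE2, hsmE2] at h0
  have hAu := condA hμ hα p hp0 hstat u
  have hAv := condA hμ hα p hp0 hstat (u + E1)
  rw [show u + E1 + -E1 = u from by abel] at hAv
  linear_combination h0 - α (u + E1) * hAu - α u * hAv

lemma condB_E2 (hμ : IsProductWith α μ) (hα : ∀ x, α x ∈ Set.Ioo (0:ℝ) 1)
    (p : Zd 2 → ℝ) (hp0 : ∀ z ∉ dirs, p z = 0) (hstat : IsStationary p μ) (u : Zd 2) :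
    (α (u + E2) - α u) * (p E2 * (α u * (1 - α (u + E2)))
      - p (-E2) * (α (u + E2) * (1 - α u))) = 0 := by
  have hf := cylP2 u (u + E2)
  have h0 := hstat (fun η => ind (η u) * ind (η (u + E2))) ⟨{u, u + E2}, hf⟩
  rw [integral_gen hμ hα p hp0 _ {u, u + E2} hf (Rset {u, u + E2}) subset_rfl,
    Finset.sum_comm] at h0
  -- site inequalities
  have hq1 : u ≠ u + E2 := fun h => (by decide : (E2:Zd 2) ≠ 0) (by linear_combination -h)
  have hq1' : u + E2 ≠ u := fun h => (by decide : (E2:Zd 2) ≠ 0) (by linear_combination h)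
  have hq2 : u ≠ u + -E2 := fun h => (by decide : (E2:Zd 2) ≠ 0) (by linear_combination h)
  have hq2' : u + -E2 ≠ u := fun h => (by decide : (E2:Zd 2) ≠ 0) (by linear_combination -h)
  have hq3 : u + E2 ≠ u + -E2 := fun h =>
    (by decide : (E2+E2:Zd 2) ≠ 0) (by linear_combination h)
  have hq3' : u + -E2 ≠ u + E2 := fun h =>
    (by decide : (E2+E2:Zd 2) ≠ 0) (by linear_combination -h)
  have hq4 : u + E2 + E2 ≠ u := fun h =>
    (by decide : (E2+E2:Zd 2) ≠ 0) (by linear_combination h)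
  have hq4' : u ≠ u + E2 + E2 := fun h =>
    (by decide : (E2+E2:Zd 2) ≠ 0) (by linear_combination -h)
  have hq5 : u + E2 + E2 ≠ u + E2 := fun h =>
    (by decide : (E2:Zd 2) ≠ 0) (by linear_combination h)
  have hq5' : u + E2 ≠ u + E2 + E2 := fun h =>
    (by decide : (E2:Zd 2) ≠ 0) (by linear_combination -h)
  have hq6 : u + E1 ≠ u := fun h => (by decide : (E1:Zd 2) ≠ 0) (by linear_combination h)
  have hq6' : u ≠ u + E1 := fun h => (by decide : (E1:Zd 2) ≠ 0) (by linear_combination -h)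
  have hq7 : u + E1 ≠ u + E2 := fun h =>
    (by decide : (E1 + -E2:Zd 2) ≠ 0) (by linear_combination h)
  have hq7' : u + E2 ≠ u + E1 := fun h =>
    (by decide : (E1 + -E2:Zd 2) ≠ 0) (by linear_combination -h)
  have hq8 : u + -E1 ≠ u := fun h => (by decide : (E1:Zd 2) ≠ 0) (by linear_combination -h)
  have hq8' : u ≠ u + -E1 := fun h => (by decide : (E1:Zd 2) ≠ 0) (by linear_combination h)
  have hq9 : u + -E1 ≠ u + E2 := fun h =>
    (by decide : (E1 + E2:Zd 2) ≠ 0) (by linear_combination -h)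
  have hq9' : u + E2 ≠ u + -E1 := fun h =>
    (by decide : (E1 + E2:Zd 2) ≠ 0) (by linear_combination h)
  have hq10 : u + E2 + E1 ≠ u := fun h =>
    (by decide : (E2 + E1:Zd 2) ≠ 0) (by linear_combination h)
  have hq10' : u ≠ u + E2 + E1 := fun h =>
    (by decide : (E2 + E1:Zd 2) ≠ 0) (by linear_combination -h)
  have hq11 : u + E2 + E1 ≠ u + E2 := fun h =>
    (by decide : (E1:Zd 2) ≠ 0) (by linear_combination h)
  have hq11' : u + E2 ≠ u + E2 + E1 := fun h =>
    (by decide : (E1:Zd 2) ≠ 0) (by linear_combination -h)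
  have hq12 : u + E2 + -E1 ≠ u := fun h =>
    (by decide : (E2 + -E1:Zd 2) ≠ 0) (by linear_combination h)
  have hq12' : u ≠ u + E2 + -E1 := fun h =>
    (by decide : (E2 + -E1:Zd 2) ≠ 0) (by linear_combination -h)
  have hq13 : u + E2 + -E1 ≠ u + E2 := fun h =>
    (by decide : (E1:Zd 2) ≠ 0) (by linear_combination -h)
  have hq13' : u + E2 ≠ u + E2 + -E1 := fun h =>
    (by decide : (E1:Zd 2) ≠ 0) (by linear_combination h)
  have hq14 : u + -E1 ≠ u + E2 + -E1 := fun h =>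
    (by decide : (E2:Zd 2) ≠ 0) (by linear_combination -h)
  have hq15 : u + E1 ≠ u + E2 + E1 := fun h =>
    (by decide : (E2:Zd 2) ≠ 0) (by linear_combination -h)
  -- memberships in Rset
  have mF1 : u ∈ ({u, u + E2} : Finset (Zd 2)) := by simp
  have mF2 : u + E2 ∈ ({u, u + E2} : Finset (Zd 2)) := by simp
  have mR1 : u ∈ Rset {u, u + E2} := subset_Rset _ mF1
  have mR2 : u + E2 ∈ Rset {u, u + E2} := subset_Rset _ mF2
  have mR : ∀ (w : Zd 2), w ∈ ({u, u + E2} : Finset (Zd 2)) → ∀ e ∈ dirs,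
      w + e ∈ Rset {u, u + E2} := by
    intro w hw e he
    exact image_subset_Rset _ e he (Finset.mem_image.2 ⟨w, hw, rfl⟩)
  -- generic vanishing
  have hvan : ∀ e ∈ dirs, ∀ z, z ≠ u → z ≠ u + E2 → z + e ≠ u → z + e ≠ u + E2 →
      p e * (ratio α z (z + e) * Jf μ (fun η => ind (η u) * ind (η (u + E2))) z (z + e)
        - Jf μ (fun η => ind (η u) * ind (η (u + E2))) (z + e) z) = 0 := by
    intro e he z h1 h2 h3 h4
    have hze : z ≠ z + e := fun h => dirs_ne_zero e he (by linear_combination -h)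
    rw [ratio_J_eq hμ hα _ {u, u + E2} hf z (z + e) hze (by simp [h1, h2]) (by simp [h3, h4]),
      sub_self, mul_zero]
  -- inner sums for each direction
  have hsE2 : (∑ x ∈ Rset {u, u + E2},
      p E2 * (ratio α x (x + E2) * Jf μ (fun η => ind (η u) * ind (η (u + E2))) x (x + E2)
        - Jf μ (fun η => ind (η u) * ind (η (u + E2))) (x + E2) x))
      = p E2 * (α (u + E2) * (α (u + -E2) * (1 - α u)))
        - p E2 * (α u * α (u + E2) * (1 - α (u + E2 + E2))) := by
    have hD : ∀ z, z ∉ (insert u (insert (u + E2) {u + -E2}) : Finset (Zd 2)) →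
        p E2 * (ratio α z (z + E2) * Jf μ (fun η => ind (η u) * ind (η (u + E2))) z (z + E2)
          - Jf μ (fun η => ind (η u) * ind (η (u + E2))) (z + E2) z) = 0 := by
      intro z hz
      simp only [Finset.mem_insert, Finset.mem_singleton] at hz
      push_neg at hz
      exact hvan E2 (by decide) z hz.1 hz.2.1
        (fun h => hz.2.2 (by linear_combination h)) (fun h => hz.1 (by linear_combination h))
    rw [sum_supp _ _ _ hD (by
      refine Finset.insert_subset mR1 (Finset.insert_subset mR2 ?_)
      exact Finset.singleton_subset_iff.2 (mR u mF1 (-E2) (by decide)))]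
    rw [Finset.sum_insert (by
        simp only [Finset.mem_insert, Finset.mem_singleton]
        push_neg
        exact ⟨hq1, hq2⟩),
      Finset.sum_insert (by simp only [Finset.mem_singleton]; exact hq3),
      Finset.sum_singleton]
    rw [show u + -E2 + E2 = u from by abel]
    rw [J2_xu hμ u (u + E2) (u + E2), J2_xv hμ u (u + E2) (u + E2 + E2),
      J2_xv hμ u (u + E2) u, J2_xu hμ u (u + E2) (u + -E2),
      J2_yv hμ hα u (u + E2) (u + E2 + E2) hq1 hq4 hq5,
      J2_yu hμ hα u (u + E2) (u + -E2) hq1 hq2' hq3']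
    have hrc : ratio α (u + -E2) u * (α u * α (u + E2) * (1 - α (u + -E2)))
        = α (u + E2) * (α (u + -E2) * (1 - α u)) := by
      linear_combination α (u + E2) * ratio_cancel hα (u + -E2) u
    linear_combination hrc * p E2
  have hsmE2 : (∑ x ∈ Rset {u, u + E2},
      p (-E2) * (ratio α x (x + -E2) * Jf μ (fun η => ind (η u) * ind (η (u + E2))) x (x + -E2)
        - Jf μ (fun η => ind (η u) * ind (η (u + E2))) (x + -E2) x))
      = p (-E2) * (α u * (α (u + E2 + E2) * (1 - α (u + E2))))
        - p (-E2) * (α u * α (u + E2) * (1 - α (u + -E2))) := by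
    have hD : ∀ z, z ∉ (insert u (insert (u + E2) {u + E2 + E2}) : Finset (Zd 2)) →
        p (-E2) * (ratio α z (z + -E2) * Jf μ (fun η => ind (η u) * ind (η (u + E2))) z (z + -E2)
          - Jf μ (fun η => ind (η u) * ind (η (u + E2))) (z + -E2) z) = 0 := by
      intro z hz
      simp only [Finset.mem_insert, Finset.mem_singleton] at hz
      push_neg at hz
      exact hvan (-E2) (by decide) z hz.1 hz.2.1
        (fun h => hz.2.1 (by linear_combination h)) (fun h => hz.2.2 (by linear_combination h))
    rw [sum_supp _ _ _ hD (by
      refine Finset.insert_subset mR1 (Finset.insert_subset mR2 ?_)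
      refine Finset.singleton_subset_iff.2 ?_
      have := mR (u + E2) mF2 E2 (by decide)
      exact this)]
    rw [Finset.sum_insert (by
        simp only [Finset.mem_insert, Finset.mem_singleton]
        push_neg
        exact ⟨hq1, hq4'⟩),
      Finset.sum_insert (by simp only [Finset.mem_singleton]; exact hq5'),
      Finset.sum_singleton]
    rw [show u + E2 + -E2 = u from by abel, show u + E2 + E2 + -E2 = u + E2 from by abel]
    rw [J2_xu hμ u (u + E2) (u + -E2), J2_xv hμ u (u + E2) u, J2_xu hμ u (u + E2) (u + E2),
      J2_xv hμ u (u + E2) (u + E2 + E2),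
      J2_yu hμ hα u (u + E2) (u + -E2) hq1 hq2' hq3',
      J2_yv hμ hα u (u + E2) (u + E2 + E2) hq1 hq4 hq5]
    have hrc : ratio α (u + E2 + E2) (u + E2) * (α u * α (u + E2) * (1 - α (u + E2 + E2)))
        = α u * (α (u + E2 + E2) * (1 - α (u + E2))) := by
      linear_combination α u * ratio_cancel hα (u + E2 + E2) (u + E2)
    linear_combination hrc * p (-E2)
  have hsE1 : (∑ x ∈ Rset {u, u + E2},
      p E1 * (ratio α x (x + E1) * Jf μ (fun η => ind (η u) * ind (η (u + E2))) x (x + E1)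
        - Jf μ (fun η => ind (η u) * ind (η (u + E2))) (x + E1) x))
      = p E1 * (α (u + E2) * (α (u + -E1) * (1 - α u)))
        + p E1 * (α u * (α (u + E2 + -E1) * (1 - α (u + E2))))
        - p E1 * (α u * α (u + E2) * (1 - α (u + E1)))
        - p E1 * (α u * α (u + E2) * (1 - α (u + E2 + E1))) := by
    have hD : ∀ z, z ∉ (insert u (insert (u + E2) (insert (u + -E1) {u + E2 + -E1}))
          : Finset (Zd 2)) →
        p E1 * (ratio α z (z + E1) * Jf μ (fun η => ind (η u) * ind (η (u + E2))) z (z + E1)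
          - Jf μ (fun η => ind (η u) * ind (η (u + E2))) (z + E1) z) = 0 := by
      intro z hz
      simp only [Finset.mem_insert, Finset.mem_singleton] at hz
      push_neg at hz
      exact hvan E1 (by decide) z hz.1 hz.2.1
        (fun h => hz.2.2.1 (by linear_combination h))
        (fun h => hz.2.2.2 (by linear_combination h))
    rw [sum_supp _ _ _ hD (by
      refine Finset.insert_subset mR1 (Finset.insert_subset mR2
        (Finset.insert_subset (mR u mF1 (-E1) (by decide)) ?_))
      exact Finset.singleton_subset_iff.2 (mR (u + E2) mF2 (-E1) (by decide)))]
    rw [Finset.sum_insert (by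
        simp only [Finset.mem_insert, Finset.mem_singleton]
        push_neg
        exact ⟨hq1, hq8', hq12'⟩),
      Finset.sum_insert (by
        simp only [Finset.mem_insert, Finset.mem_singleton]
        push_neg
        exact ⟨hq9', hq13'⟩),
      Finset.sum_insert (by simp only [Finset.mem_singleton]; exact hq14),
      Finset.sum_singleton]
    rw [show u + -E1 + E1 = u from by abel, show u + E2 + -E1 + E1 = u + E2 from by abel]
    rw [J2_xu hμ u (u + E2) (u + E1), J2_xv hμ u (u + E2) (u + E2 + E1),
      J2_xu hμ u (u + E2) (u + -E1), J2_xv hμ u (u + E2) (u + E2 + -E1),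
      J2_yu hμ hα u (u + E2) (u + E1) hq1 hq6 hq7,
      J2_yv hμ hα u (u + E2) (u + E2 + E1) hq1 hq10 hq11,
      J2_yu hμ hα u (u + E2) (u + -E1) hq1 hq8 hq9,
      J2_yv hμ hα u (u + E2) (u + E2 + -E1) hq1 hq12 hq13]
    have hrc1 : ratio α (u + -E1) u * (α u * α (u + E2) * (1 - α (u + -E1)))
        = α (u + E2) * (α (u + -E1) * (1 - α u)) := by
      linear_combination α (u + E2) * ratio_cancel hα (u + -E1) u
    have hrc2 : ratio α (u + E2 + -E1) (u + E2) *
          (α u * α (u + E2) * (1 - α (u + E2 + -E1)))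
        = α u * (α (u + E2 + -E1) * (1 - α (u + E2))) := by
      linear_combination α u * ratio_cancel hα (u + E2 + -E1) (u + E2)
    linear_combination (hrc1 + hrc2) * p E1
  have hsmE1 : (∑ x ∈ Rset {u, u + E2},
      p (-E1) * (ratio α x (x + -E1) * Jf μ (fun η => ind (η u) * ind (η (u + E2))) x (x + -E1)
        - Jf μ (fun η => ind (η u) * ind (η (u + E2))) (x + -E1) x))
      = p (-E1) * (α (u + E2) * (α (u + E1) * (1 - α u)))
        + p (-E1) * (α u * (α (u + E2 + E1) * (1 - α (u + E2))))
        - p (-E1) * (α u * α (u + E2) * (1 - α (u + -E1)))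
        - p (-E1) * (α u * α (u + E2) * (1 - α (u + E2 + -E1))) := by
    have hD : ∀ z, z ∉ (insert u (insert (u + E2) (insert (u + E1) {u + E2 + E1}))
          : Finset (Zd 2)) →
        p (-E1) * (ratio α z (z + -E1) * Jf μ (fun η => ind (η u) * ind (η (u + E2))) z (z + -E1)
          - Jf μ (fun η => ind (η u) * ind (η (u + E2))) (z + -E1) z) = 0 := by
      intro z hz
      simp only [Finset.mem_insert, Finset.mem_singleton] at hz
      push_neg at hz
      exact hvan (-E1) (by decide) z hz.1 hz.2.1
        (fun h => hz.2.2.1 (by linear_combination h))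
        (fun h => hz.2.2.2 (by linear_combination h))
    rw [sum_supp _ _ _ hD (by
      refine Finset.insert_subset mR1 (Finset.insert_subset mR2
        (Finset.insert_subset (mR u mF1 E1 (by decide)) ?_))
      exact Finset.singleton_subset_iff.2 (mR (u + E2) mF2 E1 (by decide)))]
    rw [Finset.sum_insert (by
        simp only [Finset.mem_insert, Finset.mem_singleton]
        push_neg
        exact ⟨hq1, hq6', hq10'⟩),
      Finset.sum_insert (by
        simp only [Finset.mem_insert, Finset.mem_singleton]
        push_neg
        exact ⟨hq7', hq11'⟩),
      Finset.sum_insert (by simp only [Finset.mem_singleton]; exact hq15),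
      Finset.sum_singleton]
    rw [show u + E1 + -E1 = u from by abel, show u + E2 + E1 + -E1 = u + E2 from by abel]
    rw [J2_xu hμ u (u + E2) (u + -E1), J2_xv hμ u (u + E2) (u + E2 + -E1),
      J2_xu hμ u (u + E2) (u + E1), J2_xv hμ u (u + E2) (u + E2 + E1),
      J2_yu hμ hα u (u + E2) (u + -E1) hq1 hq8 hq9,
      J2_yv hμ hα u (u + E2) (u + E2 + -E1) hq1 hq12 hq13,
      J2_yu hμ hα u (u + E2) (u + E1) hq1 hq6 hq7,
      J2_yv hμ hα u (u + E2) (u + E2 + E1) hq1 hq10 hq11]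
    have hrc1 : ratio α (u + E1) u * (α u * α (u + E2) * (1 - α (u + E1)))
        = α (u + E2) * (α (u + E1) * (1 - α u)) := by
      linear_combination α (u + E2) * ratio_cancel hα (u + E1) u
    have hrc2 : ratio α (u + E2 + E1) (u + E2) *
          (α u * α (u + E2) * (1 - α (u + E2 + E1)))
        = α u * (α (u + E2 + E1) * (1 - α (u + E2))) := by
      linear_combination α u * ratio_cancel hα (u + E2 + E1) (u + E2)
    linear_combination (hrc1 + hrc2) * p (-E1)
  rw [sum_dirs] at h0
  rw [hsE2, hsmE2, hsE1, hsmE1] at h0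
  have hAu := condA hμ hα p hp0 hstat u
  have hAv := condA hμ hα p hp0 hstat (u + E2)
  rw [show u + E2 + -E2 = u from by abel] at hAv
  linear_combination h0 - α (u + E2) * hAu - α u * hAv

end Infra

theorem nearest_neighbor_Z2_stationary_product_classification
    (p : Zd 2 → ℝ) (p₁ p₂ q₁ q₂ : ℝ)
    (hp₁ : 0 < p₁) (hp₂ : 0 < p₂) (hq₁ : 0 < q₁) (hq₂ : 0 < q₂)
    (hsum : p₁ + p₂ + q₁ + q₂ = 1)
    (hne₁ : p₁ ≠ q₁) (hne₂ : p₂ ≠ q₂)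
    (he₁ : p ![1, 0] = p₁) (he₂ : p ![0, 1] = p₂)
    (he₁' : p (-![1, 0]) = q₁) (he₂' : p (-![0, 1]) = q₂)
    (hother : ∀ z : Zd 2, z ≠ ![1, 0] → z ≠ ![0, 1] → z ≠ -![1, 0] → z ≠ -![0, 1] → p z = 0)
    (α : Zd 2 → ℝ) (hα : ∀ x, α x ∈ Set.Ioo (0 : ℝ) 1) (hα0 : α 0 = 1 / 2)
    (μ : Measure (Conf 2)) (hμ : IsProductWith α μ) :
    IsStationary p μ ↔
      (pifun α = fun _ => 1) ∨
      (pifun α = fun x : Zd 2 => (p₁ / q₁) ^ (x 0)) ∨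
      (pifun α = fun x : Zd 2 => (p₂ / q₂) ^ (x 1)) ∨
      (pifun α = fun x : Zd 2 => (p₁ / q₁) ^ (x 0) * (p₂ / q₂) ^ (x 1)) := by
  classical
  have hpE1 : p E1 = p₁ := he₁
  have hpE2 : p E2 = p₂ := he₂
  have hpE1' : p (-E1) = q₁ := he₁'
  have hpE2' : p (-E2) = q₂ := he₂'
  have hp0 : ∀ z ∉ dirs, p z = 0 := by
    intro z hz
    simp only [dirs, Finset.mem_insert, Finset.mem_singleton, not_or] at hz
    exact hother z hz.1 hz.2.1 hz.2.2.1 hz.2.2.2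
  constructor
  · -- forward direction
    intro hstat
    have hπpos : ∀ x, 0 < pifun α x := pifun_pos hα
    have hρ₁pos : (0:ℝ) < p₁ / q₁ := div_pos hp₁ hq₁
    have hρ₂pos : (0:ℝ) < p₂ / q₂ := div_pos hp₂ hq₂
    have hρ₁ne : (p₁/q₁ : ℝ) ≠ 1 := fun h => hne₁ ((div_eq_one_iff_eq hq₁.ne').1 h)
    have hρ₂ne : (p₂/q₂ : ℝ) ≠ 1 := fun h => hne₂ ((div_eq_one_iff_eq hq₂.ne').1 h)
    -- edge dichotomies
    have hdich1 : ∀ u, pifun α (u + E1) = pifun α u ∨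
        pifun α (u + E1) = (p₁/q₁) * pifun α u := by
      intro u
      have hB := condB_E1 hμ hα p hp0 hstat u
      rw [hpE1, hpE1'] at hB
      rcases hα u with ⟨h0, h1⟩
      rcases hα (u + E1) with ⟨h0', h1'⟩
      rcases mul_eq_zero.1 hB with h | h
      · left
        have hαeq : α (u + E1) = α u := by linarith [sub_eq_zero.1 h]
        unfold pifun
        rw [hαeq]
      · right
        unfold pifun
        have d1 : (1:ℝ) - α u ≠ 0 := by linarith
        have d2 : (1:ℝ) - α (u + E1) ≠ 0 := by linarith
        field_simp
        linear_combination -h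
    have hdich2 : ∀ u, pifun α (u + E2) = pifun α u ∨
        pifun α (u + E2) = (p₂/q₂) * pifun α u := by
      intro u
      have hB := condB_E2 hμ hα p hp0 hstat u
      rw [hpE2, hpE2'] at hB
      rcases hα u with ⟨h0, h1⟩
      rcases hα (u + E2) with ⟨h0', h1'⟩
      rcases mul_eq_zero.1 hB with h | h
      · left
        have hαeq : α (u + E2) = α u := by linarith [sub_eq_zero.1 h]
        unfold pifun
        rw [hαeq]
      · right
        unfold pifun
        have d1 : (1:ℝ) - α u ≠ 0 := by linarith
        have d2 : (1:ℝ) - α (u + E2) ≠ 0 := by linarith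
        field_simp
        linear_combination -h
    -- the exponent fields
    set n₁ : Zd 2 → ℤ := fun u => if pifun α (u + E1) = pifun α u then 0 else 1 with hn₁def
    set n₂ : Zd 2 → ℤ := fun u => if pifun α (u + E2) = pifun α u then 0 else 1 with hn₂def
    have h01 : ∀ u, n₁ u = 0 ∨ n₁ u = 1 := by
      intro u
      by_cases h : pifun α (u + E1) = pifun α u <;> simp [hn₁def, h]
    have h02 : ∀ u, n₂ u = 0 ∨ n₂ u = 1 := by
      intro u
      by_cases h : pifun α (u + E2) = pifun α u <;> simp [hn₂def, h]
    have hn₁ : ∀ u, pifun α (u + E1) = (p₁/q₁) ^ (n₁ u) * pifun α u := by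
      intro u
      by_cases h : pifun α (u + E1) = pifun α u
      · simp [hn₁def, h]
      · have hval : n₁ u = 1 := by simp [hn₁def, h]
        rw [hval, zpow_one]
        exact (hdich1 u).resolve_left h
    have hn₂ : ∀ u, pifun α (u + E2) = (p₂/q₂) ^ (n₂ u) * pifun α u := by
      intro u
      by_cases h : pifun α (u + E2) = pifun α u
      · simp [hn₂def, h]
      · have hval : n₂ u = 1 := by simp [hn₂def, h]
        rw [hval, zpow_one]
        exact (hdich2 u).resolve_left h
    -- multiplicative curl relation
    have hCm : ∀ u, ((p₁/q₁ : ℝ) ^ (n₁ u) * (p₂/q₂) ^ (n₂ (u + E1)))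
        = (p₂/q₂) ^ (n₂ u) * (p₁/q₁) ^ (n₁ (u + E2)) := by
      intro u
      have e1 : pifun α (u + E1 + E2) = (p₂/q₂) ^ (n₂ (u + E1)) *
          ((p₁/q₁) ^ (n₁ u) * pifun α u) := by
        rw [hn₂ (u + E1), hn₁ u]
      have e2 : pifun α (u + E2 + E1) = (p₁/q₁) ^ (n₁ (u + E2)) *
          ((p₂/q₂) ^ (n₂ u) * pifun α u) := by
        rw [hn₁ (u + E2), hn₂ u]
      rw [show u + E2 + E1 = u + E1 + E2 by ring] at e2
      have h3 : ((p₁/q₁ : ℝ) ^ (n₁ u) * (p₂/q₂) ^ (n₂ (u + E1))) * pifun α u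
          = ((p₂/q₂ : ℝ) ^ (n₂ u) * (p₁/q₁) ^ (n₁ (u + E2))) * pifun α u := by
        linear_combination e1.symm.trans e2
      exact mul_right_cancel₀ (ne_of_gt (hπpos u)) h3
    -- logarithmic curl relation
    have hClog : ∀ u, ((n₁ u : ℝ) - (n₁ (u + E2) : ℝ)) * Real.log (p₁/q₁)
        = ((n₂ u : ℝ) - (n₂ (u + E1) : ℝ)) * Real.log (p₂/q₂) := by
      intro u
      have h := congrArg Real.log (hCm u)
      rw [Real.log_mul (zpow_ne_zero _ (ne_of_gt hρ₁pos)) (zpow_ne_zero _ (ne_of_gt hρ₂pos)),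
        Real.log_mul (zpow_ne_zero _ (ne_of_gt hρ₂pos)) (zpow_ne_zero _ (ne_of_gt hρ₁pos)),
        Real.log_zpow, Real.log_zpow, Real.log_zpow, Real.log_zpow] at h
      linear_combination h
    -- the flux identities
    have hT1 : ∀ w, p₁ * (α w * (1 - α (w + E1))) - q₁ * (α (w + E1) * (1 - α w))
        = (p₁ - q₁) * (α w * (1 - α w)) * (1 - (n₁ w : ℝ)) := by
      intro w
      by_cases h : pifun α (w + E1) = pifun α w
      · have hαeq : α (w + E1) = α w := alpha_eq_of_pifun_eq hα h
        have hval : n₁ w = 0 := by simp [hn₁def, h]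
        rw [hval, hαeq]
        push_cast
        ring
      · have hval : n₁ w = 1 := by simp [hn₁def, h]
        have hune : α (w + E1) - α w ≠ 0 := by
          intro heq
          apply h
          unfold pifun
          rw [show α (w + E1) = α w by linarith [sub_eq_zero.1 heq]]
        have hB := condB_E1 hμ hα p hp0 hstat w
        rw [hpE1, hpE1'] at hB
        have hzero := (mul_eq_zero.1 hB).resolve_left hune
        rw [hval]
        push_cast
        linear_combination hzero
    have hH1 : ∀ w, p₁ * (α w * (1 - α (w + E1))) - q₁ * (α (w + E1) * (1 - α w))
        = (p₁ - q₁) * (α (w + E1) * (1 - α (w + E1))) * (1 - (n₁ w : ℝ)) := by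
      intro w
      by_cases h : pifun α (w + E1) = pifun α w
      · have hαeq : α (w + E1) = α w := alpha_eq_of_pifun_eq hα h
        have hval : n₁ w = 0 := by simp [hn₁def, h]
        rw [hval, hαeq]
        push_cast
        ring
      · have hval : n₁ w = 1 := by simp [hn₁def, h]
        have hune : α (w + E1) - α w ≠ 0 := by
          intro heq
          apply h
          unfold pifun
          rw [show α (w + E1) = α w by linarith [sub_eq_zero.1 heq]]
        have hB := condB_E1 hμ hα p hp0 hstat w
        rw [hpE1, hpE1'] at hB
        have hzero := (mul_eq_zero.1 hB).resolve_left hune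
        rw [hval]
        push_cast
        linear_combination hzero
    have hT2 : ∀ w, p₂ * (α w * (1 - α (w + E2))) - q₂ * (α (w + E2) * (1 - α w))
        = (p₂ - q₂) * (α w * (1 - α w)) * (1 - (n₂ w : ℝ)) := by
      intro w
      by_cases h : pifun α (w + E2) = pifun α w
      · have hαeq : α (w + E2) = α w := alpha_eq_of_pifun_eq hα h
        have hval : n₂ w = 0 := by simp [hn₂def, h]
        rw [hval, hαeq]
        push_cast
        ring
      · have hval : n₂ w = 1 := by simp [hn₂def, h]
        have hune : α (w + E2) - α w ≠ 0 := by
          intro heq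
          apply h
          unfold pifun
          rw [show α (w + E2) = α w by linarith [sub_eq_zero.1 heq]]
        have hB := condB_E2 hμ hα p hp0 hstat w
        rw [hpE2, hpE2'] at hB
        have hzero := (mul_eq_zero.1 hB).resolve_left hune
        rw [hval]
        push_cast
        linear_combination hzero
    have hH2 : ∀ w, p₂ * (α w * (1 - α (w + E2))) - q₂ * (α (w + E2) * (1 - α w))
        = (p₂ - q₂) * (α (w + E2) * (1 - α (w + E2))) * (1 - (n₂ w : ℝ)) := by
      intro w
      by_cases h : pifun α (w + E2) = pifun α w
      · have hαeq : α (w + E2) = α w := alpha_eq_of_pifun_eq hα h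
        have hval : n₂ w = 0 := by simp [hn₂def, h]
        rw [hval, hαeq]
        push_cast
        ring
      · have hval : n₂ w = 1 := by simp [hn₂def, h]
        have hune : α (w + E2) - α w ≠ 0 := by
          intro heq
          apply h
          unfold pifun
          rw [show α (w + E2) = α w by linarith [sub_eq_zero.1 heq]]
        have hB := condB_E2 hμ hα p hp0 hstat w
        rw [hpE2, hpE2'] at hB
        have hzero := (mul_eq_zero.1 hB).resolve_left hune
        rw [hval]
        push_cast
        linear_combination hzero
    -- the divergence (A') relation
    have hA' : ∀ u, (p₁ - q₁) * ((n₁ u : ℝ) - (n₁ (u + -E1) : ℝ))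
        + (p₂ - q₂) * ((n₂ u : ℝ) - (n₂ (u + -E2) : ℝ)) = 0 := by
      intro u
      rcases hα u with ⟨h0, h1⟩
      have hβ : α u * (1 - α u) ≠ 0 := ne_of_gt (mul_pos h0 (by linarith))
      have hAu := condA hμ hα p hp0 hstat u
      rw [hpE1, hpE1', hpE2, hpE2'] at hAu
      have hh1 := hH1 (u + -E1)
      rw [show u + -E1 + E1 = u by ring] at hh1
      have hh2 := hH2 (u + -E2)
      rw [show u + -E2 + E2 = u by ring] at hh2
      have ht1 := hT1 u
      have ht2 := hT2 u
      have hA'' : (α u * (1 - α u)) * ((p₁ - q₁) * ((n₁ u : ℝ) - (n₁ (u + -E1) : ℝ))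
          + (p₂ - q₂) * ((n₂ u : ℝ) - (n₂ (u + -E2) : ℝ))) = 0 := by
        linear_combination hAu - hh1 + ht1 - hh2 + ht2
      exact (mul_eq_zero.1 hA'').resolve_left hβ
    -- sign facts
    have hc₁ : p₁ - q₁ ≠ 0 := sub_ne_zero.2 hne₁
    have hc₂ : p₂ - q₂ ≠ 0 := sub_ne_zero.2 hne₂
    have hL₁ : Real.log (p₁/q₁) ≠ 0 := Real.log_ne_zero_of_pos_of_ne_one hρ₁pos hρ₁ne
    have hL₂ : Real.log (p₂/q₂) ≠ 0 := Real.log_ne_zero_of_pos_of_ne_one hρ₂pos hρ₂ne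
    have hsgn₁ : 0 < p₁ - q₁ ↔ 0 < Real.log (p₁/q₁) := by
      constructor
      · intro h
        exact Real.log_pos ((one_lt_div hq₁).2 (by linarith))
      · intro h
        by_contra hc
        push_neg at hc
        have hle : p₁/q₁ ≤ 1 := (div_le_one hq₁).2 (by linarith)
        linarith [Real.log_nonpos (le_of_lt hρ₁pos) hle]
    have hsgn₂ : 0 < p₂ - q₂ ↔ 0 < Real.log (p₂/q₂) := by
      constructor
      · intro h
        exact Real.log_pos ((one_lt_div hq₂).2 (by linarith))
      · intro h
        by_contra hc
        push_neg at hc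
        have hle : p₂/q₂ ≤ 1 := (div_le_one hq₂).2 (by linarith)
        linarith [Real.log_nonpos (le_of_lt hρ₂pos) hle]
    -- classification
    obtain ⟨hcon1, hcon2⟩ := classify n₁ n₂ h01 h02 (p₁ - q₁) (p₂ - q₂)
      (Real.log (p₁/q₁)) (Real.log (p₂/q₂)) hc₁ hc₂ hL₁ hL₂ hsgn₁ hsgn₂ hA' hClog
    -- closed-form of pifun
    have hπ0 : pifun α 0 = 1 := by
      unfold pifun
      rw [hα0]
      norm_num
    have hform := pi_formula (pifun α) ((p₁/q₁) ^ (n₁ 0)) ((p₂/q₂) ^ (n₂ 0))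
      (zpow_ne_zero _ (ne_of_gt hρ₁pos)) (zpow_ne_zero _ (ne_of_gt hρ₂pos)) hπ0
      (fun u => by rw [hn₁ u, hcon1 u]) (fun u => by rw [hn₂ u, hcon2 u])
    rcases h01 0 with hm1 | hm1 <;> rcases h02 0 with hm2 | hm2
    · left
      funext x
      have := hform x
      rw [hm1, hm2] at this
      simpa using this
    · right; right; left
      funext x
      have := hform x
      rw [hm1, hm2] at this
      simpa using this
    · right; left
      funext x
      have := hform x
      rw [hm1, hm2] at this
      simpa using this
    · right; right; right
      funext x
      have := hform x
      rw [hm1, hm2] at this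
      simpa using this
  · -- backward direction
    intro h4
    exact backward_full hμ hα p p₁ p₂ q₁ q₂ hp₁ hp₂ hq₁ hq₂ hpE1 hpE2 hpE1' hpE2' hp0 h4

end ExclusionPaper
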